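/- arXiv:2507.20602 — 6 statements merged into one kernel-verified Lean document; each statement's English description precedes it below -/
import Mathlib

section
/- Let 0 < α ≤ 1 and let u : (0,∞) → ℝ be measurable with u(t) ≥ 0 for all t > 0. Assume there is a constant K > 0 such that ∫₀^∞ e^{-st} u(t) dt ≥ K s^{-α} for all s ∈ (0,1]. Then for every ε > 0 with α + ε ≤ 1, ∫₀^∞ u(t) t^{-α-ε} dt ≥ K / (ε · Γ(α+ε)), where Γ denotes the Gamma function. -/
/-!
Writing `t^{-γ} Γ(γ) = ∫₀^∞ s^{γ-1} e^{-st} ds` with `γ = α + ε` and applying Tonelli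
gives `Γ(γ) ∫₀^∞ u(t) t^{-γ} dt = ∫₀^∞ s^{γ-1} û(s) ds`. Keeping only `s ∈ (0,1]` and
inserting the lower bound `û(s) ≥ K s^{-α}` leaves `K ∫₀¹ s^{ε-1} ds = K / ε`.
-/

open MeasureTheory Real Set

open scoped ENNReal

lemma lintegral_rpow_mul_exp_neg_mul_Ioi {γ t : ℝ} (hγ : 0 < γ) (ht : 0 < t) :
    ∫⁻ s in Ioi 0, ENNReal.ofReal (s ^ (γ - 1) * exp (-(s * t)))
      = ENNReal.ofReal (Gamma γ) * ENNReal.ofReal (t ^ (-γ)) := by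
  have hint : IntegrableOn (fun s : ℝ ↦ s ^ (γ - 1) * exp (-(s * t))) (Ioi 0) := by
    simpa [rpow_one, mul_comm] using
      integrableOn_rpow_mul_exp_neg_mul_rpow (p := 1) (by linarith) zero_lt_one ht
  have hnonneg : 0 ≤ᵐ[volume.restrict (Ioi 0)] fun s : ℝ ↦ s ^ (γ - 1) * exp (-(s * t)) :=
    (ae_restrict_iff' measurableSet_Ioi).mpr (.of_forall fun s (hs : 0 < s) ↦ by positivity)
  rw [← ofReal_integral_eq_lintegral_ofReal hint hnonneg,
    ← ENNReal.ofReal_mul (Gamma_pos_of_pos hγ).le]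
  congr 1
  simp_rw [mul_comm _ t]
  rw [integral_rpow_mul_exp_neg_mul_Ioi hγ ht, one_div, inv_rpow ht.le, ← rpow_neg ht.le,
    mul_comm]

lemma lintegral_rpow_Ioc_zero_one {ε : ℝ} (hε : 0 < ε) :
    ∫⁻ s in Ioc 0 1, ENNReal.ofReal (s ^ (ε - 1)) = ENNReal.ofReal ε⁻¹ := by
  have hint : IntegrableOn (fun s : ℝ ↦ s ^ (ε - 1)) (Ioc 0 1) :=
    (intervalIntegral.intervalIntegrable_rpow' (by linarith)).1
  have hnonneg : 0 ≤ᵐ[volume.restrict (Ioc 0 1)] fun s : ℝ ↦ s ^ (ε - 1) :=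
    (ae_restrict_iff' measurableSet_Ioc).mpr (.of_forall fun s hs ↦ rpow_nonneg hs.1.le _)
  rw [← ofReal_integral_eq_lintegral_ofReal hint hnonneg,
    ← intervalIntegral.integral_of_le zero_le_one, integral_rpow (Or.inl (by linarith))]
  simp [zero_rpow hε.ne']

lemma lintegral_rpow_mul_laplace {f : ℝ → ℝ≥0∞} (hf : Measurable f) {γ : ℝ} (hγ : 0 < γ) :
    ∫⁻ s in Ioi 0, ENNReal.ofReal (s ^ (γ - 1)) *
        ∫⁻ t in Ioi 0, ENNReal.ofReal (exp (-(s * t))) * f t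
      = ENNReal.ofReal (Gamma γ) * ∫⁻ t in Ioi 0, ENNReal.ofReal (t ^ (-γ)) * f t := by
  calc _ = ∫⁻ s in Ioi 0, ∫⁻ t in Ioi 0,
          ENNReal.ofReal (s ^ (γ - 1) * exp (-(s * t))) * f t := by
        refine setLIntegral_congr_fun measurableSet_Ioi fun s (hs : 0 < s) ↦ ?_
        rw [← lintegral_const_mul' _ _ ENNReal.ofReal_ne_top]
        simp_rw [ENNReal.ofReal_mul (rpow_nonneg hs.le _), mul_assoc]
    _ = ∫⁻ t in Ioi 0, ∫⁻ s in Ioi 0, ENNReal.ofReal (s ^ (γ - 1) * exp (-(s * t))) * f t :=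
        lintegral_lintegral_swap (by fun_prop)
    _ = ∫⁻ t in Ioi 0, ENNReal.ofReal (Gamma γ) * (ENNReal.ofReal (t ^ (-γ)) * f t) := by
        refine setLIntegral_congr_fun measurableSet_Ioi fun t ht ↦ ?_
        rw [lintegral_mul_const _ (by fun_prop), lintegral_rpow_mul_exp_neg_mul_Ioi hγ ht,
          mul_assoc]
    _ = _ := lintegral_const_mul' _ _ ENNReal.ofReal_ne_top

lemma le_Gamma_mul_lintegral_rpow_neg_of_le_laplace {f : ℝ → ℝ≥0∞} (hf : Measurable f)
    {α ε K : ℝ} (hαε : 0 < α + ε) (hε : 0 < ε)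
    (hLap : ∀ s ∈ Ioc (0 : ℝ) 1,
      ENNReal.ofReal (K * s ^ (-α)) ≤ ∫⁻ t in Ioi 0, ENNReal.ofReal (exp (-(s * t))) * f t) :
    ENNReal.ofReal K * ENNReal.ofReal ε⁻¹ ≤
      ENNReal.ofReal (Gamma (α + ε)) * ∫⁻ t in Ioi 0, ENNReal.ofReal (t ^ (-(α + ε))) * f t := by
  calc _ = ∫⁻ s in Ioc 0 1,
          ENNReal.ofReal (s ^ (α + ε - 1)) * ENNReal.ofReal (K * s ^ (-α)) := by
        rw [← lintegral_rpow_Ioc_zero_one hε, ← lintegral_const_mul' _ _ ENNReal.ofReal_ne_top]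
        refine setLIntegral_congr_fun measurableSet_Ioc fun s hs ↦ ?_
        rw [← ENNReal.ofReal_mul' (rpow_nonneg hs.1.le _),
          ← ENNReal.ofReal_mul (rpow_nonneg hs.1.le _), mul_left_comm, ← rpow_add hs.1]
        ring_nf
    _ ≤ ∫⁻ s in Ioi 0, ENNReal.ofReal (s ^ (α + ε - 1)) *
          ∫⁻ t in Ioi 0, ENNReal.ofReal (exp (-(s * t))) * f t := by
        refine (setLIntegral_mono' measurableSet_Ioc fun s hs ↦ ?_).trans
          (lintegral_mono_set Ioc_subset_Ioi_self)
        gcongr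
        exact hLap s hs
    _ = _ := lintegral_rpow_mul_laplace hf hαε

theorem stmt_1_general (α : ℝ) (hα0 : 0 < α)
    (u : ℝ → ℝ) (hum : Measurable u)
    (K : ℝ)
    (hLap : ∀ s ∈ Set.Ioc (0:ℝ) 1,
      ENNReal.ofReal (K * s ^ (-α))
        ≤ ∫⁻ t in Set.Ioi (0:ℝ), ENNReal.ofReal (Real.exp (-(s * t)) * u t)) :
    ∀ ε > (0:ℝ), α + ε ≤ 1 →
      ENNReal.ofReal (K / (ε * Real.Gamma (α + ε)))
        ≤ ∫⁻ t in Set.Ioi (0:ℝ), ENNReal.ofReal (u t * t ^ (-α - ε)) := by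
  intro ε hε _
  simp_rw [ENNReal.ofReal_mul (exp_nonneg _)] at hLap
  have key := le_Gamma_mul_lintegral_rpow_neg_of_le_laplace (f := fun t ↦ ENNReal.ofReal (u t))
    (by fun_prop) (add_pos hα0 hε) hε hLap
  have hbound : ENNReal.ofReal (K / (ε * Gamma (α + ε)))
      = ENNReal.ofReal K * ENNReal.ofReal ε⁻¹ / ENNReal.ofReal (Gamma (α + ε)) := by
    rw [← ENNReal.ofReal_mul' (inv_nonneg.mpr hε.le),
      ← ENNReal.ofReal_div_of_pos (Gamma_pos_of_pos (add_pos hα0 hε)), div_mul_eq_div_div,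
      div_eq_mul_inv K ε]
  rw [hbound, setLIntegral_congr_fun measurableSet_Ioi fun t (ht : 0 < t) ↦ by
    rw [mul_comm, ENNReal.ofReal_mul (rpow_nonneg ht.le _), ← neg_add']]
  exact ENNReal.div_le_of_le_mul' key

/-- If `0 < α ≤ 1`, `u ≥ 0` on `(0,∞)` is measurable and its Laplace
transform satisfies `û(s) ≥ K s^{-α}` for `s ∈ (0,1]`, then for every `ε > 0` with
`α + ε ≤ 1`, `∫₀^∞ u(t) t^{-α-ε} dt ≥ K / (ε Γ(α+ε))`. -/
theorem stmt_1 (α : ℝ) (hα0 : 0 < α) (hα1 : α ≤ 1)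
    (u : ℝ → ℝ) (hum : Measurable u) (hupos : ∀ t > (0:ℝ), 0 ≤ u t)
    (K : ℝ) (hK : 0 < K)
    (hLap : ∀ s ∈ Set.Ioc (0:ℝ) 1,
      ENNReal.ofReal (K * s ^ (-α))
        ≤ ∫⁻ t in Set.Ioi (0:ℝ), ENNReal.ofReal (Real.exp (-(s * t)) * u t)) :
    ∀ ε > (0:ℝ), α + ε ≤ 1 →
      ENNReal.ofReal (K / (ε * Real.Gamma (α + ε)))
        ≤ ∫⁻ t in Set.Ioi (0:ℝ), ENNReal.ofReal (u t * t ^ (-α - ε)) :=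
  stmt_1_general α hα0 u hum K hLap
end

section
/- Let 0 < α < 1, let u⁰ ∈ L¹(0,∞) be nonnegative with M = ∫₀^∞ u⁰(a) da, and let U : (0,∞) → [0,∞) be locally integrable and satisfy, for all t > 0, ∫₀^t U(τ) (1+t-τ)^{-α} dτ = M − ∫₀^∞ u⁰(a) ((1+a)/(1+t+a))^α da. Then for every δ ∈ (0,1), ∫₁^∞ t^{-α-δ} U(t) dt ≤ (1+α) M / δ. -/
/-!
Evaluating the renewal equation at time `s` and discarding the (nonnegative) initial-data term
gives `∫_(0,s] U(τ) (1+s-τ)^{-α} dτ ≤ M`; since the kernel is at least `s^{-α}` on `(1,s]`, this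
yields the growth bound `∫_(1,s] U ≤ M s^α`. Writing `t^{-β} = β ∫_t^∞ s^{-β-1} ds` with
`β = α + δ` and applying Tonelli,
`∫_1^∞ t^{-β} U(t) dt = β ∫_1^∞ s^{-β-1} ∫_1^s U(t) dt ds ≤ β M ∫_1^∞ s^{-δ-1} ds = β M / δ`,
and `β ≤ 1 + α` because `δ < 1`.
-/

open MeasureTheory Real Set
open scoped ENNReal

theorem lintegral_Ioi_ofReal_rpow {a c : ℝ} (ha : a < -1) (hc : 0 < c) :
    ∫⁻ s in Ioi c, ENNReal.ofReal (s ^ a) = ENNReal.ofReal (-c ^ (a + 1) / (a + 1)) := by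
  rw [← integral_Ioi_rpow_of_lt ha hc,
    ofReal_integral_eq_lintegral_ofReal (integrableOn_Ioi_rpow_of_lt ha hc)]
  filter_upwards [ae_restrict_mem measurableSet_Ioi] with s hs
  exact rpow_nonneg (hc.trans hs).le _

theorem ofReal_rpow_neg_eq_mul_lintegral_Ioi {β t : ℝ} (hβ : 0 < β) (ht : 0 < t) :
    ENNReal.ofReal (t ^ (-β)) =
      ENNReal.ofReal β * ∫⁻ s in Ioi t, ENNReal.ofReal (s ^ (-β - 1)) := by
  rw [lintegral_Ioi_ofReal_rpow (by linarith) ht, ← ENNReal.ofReal_mul hβ.le,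
    show -β - 1 + 1 = -β by ring]
  congr 1
  field_simp

theorem aestronglyMeasurable_restrict_Ioi_of_integrableOn_Ioc {E : Type*} [NormedAddCommGroup E]
    {μ : Measure ℝ} {U : ℝ → E} {a : ℝ} (hU : ∀ t > a, IntegrableOn U (Ioc a t) μ) :
    AEStronglyMeasurable U (μ.restrict (Ioi a)) := by
  have hcover : ⋃ n : ℕ, Ioc a (a + (n + 1)) = Ioi a := by
    refine iUnion_Ioc_eq_Ioi_self_iff.mpr fun x _ => ?_
    obtain ⟨n, hn⟩ := exists_nat_ge (x - a)
    exact ⟨n, by linarith⟩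
  rw [← hcover, aestronglyMeasurable_iUnion_iff]
  exact fun n => (hU _ (by linarith [n.cast_nonneg (α := ℝ)])).aestronglyMeasurable

theorem lintegral_Ioi_one_rpow_neg_mul_eq {f : ℝ → ℝ≥0∞} {β : ℝ}
    (hf : AEMeasurable f (volume.restrict (Ioi 1))) (hβ : 0 < β) :
    ∫⁻ t in Ioi 1, ENNReal.ofReal (t ^ (-β)) * f t =
      ENNReal.ofReal β *
        ∫⁻ s in Ioi 1, ENNReal.ofReal (s ^ (-β - 1)) * ∫⁻ t in Ioo 1 s, f t := by
  set w : ℝ → ℝ≥0∞ := fun s => ENNReal.ofReal (s ^ (-β - 1))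
  have hw : Measurable w := by fun_prop
  set K : ℝ × ℝ → ℝ≥0∞ := {p | p.1 < p.2}.indicator fun p => w p.2 * f p.1
  have hK : AEMeasurable K ((volume.restrict (Ioi 1)).prod (volume.restrict (Ioi 1))) :=
    ((hw.comp measurable_snd).aemeasurable.mul hf.comp_fst).indicator
      (measurableSet_lt measurable_fst measurable_snd)
  have hK_s : ∀ t ∈ Ioi (1 : ℝ), ∫⁻ s in Ioi 1, K (t, s) = (∫⁻ s in Ioi t, w s) * f t := by
    intro t ht
    change ∫⁻ s in Ioi 1, (Ioi t).indicator (fun s => w s * f t) s = _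
    rw [lintegral_indicator measurableSet_Ioi, Measure.restrict_restrict measurableSet_Ioi,
      inter_eq_left.mpr (Ioi_subset_Ioi ht.out.le), lintegral_mul_const _ hw]
  have hK_t : ∀ s ∈ Ioi (1 : ℝ), ∫⁻ t in Ioi 1, K (t, s) = w s * ∫⁻ t in Ioo 1 s, f t := by
    intro s _
    change ∫⁻ t in Ioi 1, (Iio s).indicator (fun t => w s * f t) t = _
    rw [lintegral_indicator measurableSet_Iio, Measure.restrict_restrict measurableSet_Iio,
      inter_comm, Ioi_inter_Iio, lintegral_const_mul' _ _ ENNReal.ofReal_ne_top]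
  calc ∫⁻ t in Ioi 1, ENNReal.ofReal (t ^ (-β)) * f t
      = ∫⁻ t in Ioi 1, ENNReal.ofReal β * ∫⁻ s in Ioi 1, K (t, s) := by
        refine setLIntegral_congr_fun measurableSet_Ioi fun t ht => ?_
        rw [hK_s t ht, ofReal_rpow_neg_eq_mul_lintegral_Ioi hβ (one_pos.trans ht), mul_assoc]
    _ = ENNReal.ofReal β * ∫⁻ s in Ioi 1, ∫⁻ t in Ioi 1, K (t, s) := by
        rw [lintegral_const_mul' _ _ ENNReal.ofReal_ne_top,
          lintegral_lintegral_swap (f := fun t s => K (t, s)) hK]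
    _ = ENNReal.ofReal β * ∫⁻ s in Ioi 1, w s * ∫⁻ t in Ioo 1 s, f t := by
        rw [setLIntegral_congr_fun measurableSet_Ioi hK_t]

theorem lintegral_Ioi_one_rpow_neg_mul_le_of_growth {f : ℝ → ℝ≥0∞} {α β : ℝ} {c : ℝ≥0∞}
    (hf : AEMeasurable f (volume.restrict (Ioi 1))) (hβ : 0 < β) (hαβ : α < β)
    (hgrowth : ∀ s > 1, ∫⁻ t in Ioc 1 s, f t ≤ c * ENNReal.ofReal (s ^ α)) :
    ∫⁻ t in Ioi 1, ENNReal.ofReal (t ^ (-β)) * f t ≤ c * ENNReal.ofReal (β / (β - α)) := by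
  have hpointwise : ∀ s ∈ Ioi (1 : ℝ), ENNReal.ofReal (s ^ (-β - 1)) * ∫⁻ t in Ioo 1 s, f t ≤
      c * ENNReal.ofReal (s ^ (α - β - 1)) := by
    intro s (hs : 1 < s)
    have hs0 : 0 < s := one_pos.trans hs
    calc ENNReal.ofReal (s ^ (-β - 1)) * ∫⁻ t in Ioo 1 s, f t
        ≤ ENNReal.ofReal (s ^ (-β - 1)) * (c * ENNReal.ofReal (s ^ α)) := by
          gcongr
          exact (lintegral_mono_set Ioo_subset_Ioc_self).trans (hgrowth s hs)
      _ = c * ENNReal.ofReal (s ^ (α - β - 1)) := by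
          rw [mul_left_comm, ← ENNReal.ofReal_mul (rpow_nonneg hs0.le _), ← rpow_add hs0,
            show -β - 1 + α = α - β - 1 by ring]
  calc ∫⁻ t in Ioi 1, ENNReal.ofReal (t ^ (-β)) * f t
      ≤ ENNReal.ofReal β * ∫⁻ s in Ioi 1, c * ENNReal.ofReal (s ^ (α - β - 1)) := by
        rw [lintegral_Ioi_one_rpow_neg_mul_eq hf hβ]
        gcongr 1
        exact setLIntegral_mono' measurableSet_Ioi hpointwise
    _ = c * ENNReal.ofReal (β / (β - α)) := by
        rw [lintegral_const_mul c (by fun_prop), lintegral_Ioi_ofReal_rpow (by linarith) one_pos,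
          mul_left_comm, ← ENNReal.ofReal_mul hβ.le, one_rpow,
          show α - β - 1 + 1 = -(β - α) by ring, neg_div_neg_eq, mul_one_div]

theorem setIntegral_Ioc_one_le_of_renewal {U : ℝ → ℝ} {α M s : ℝ} (hα : 0 ≤ α) (hs : 1 ≤ s)
    (hU : ∀ τ ∈ Ioc 0 s, 0 ≤ U τ) (hUint : IntegrableOn U (Ioc 0 s))
    (hconv : ∫ τ in Ioc 0 s, U τ * (1 + s - τ) ^ (-α) ≤ M) :
    ∫ τ in Ioc 1 s, U τ ≤ M * s ^ α := by
  have hs0 : 0 < s := one_pos.trans_le hs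
  have hIoc : Ioc 1 s ⊆ Ioc 0 s := Ioc_subset_Ioc_left zero_le_one
  have hint : IntegrableOn (fun τ => U τ * (1 + s - τ) ^ (-α)) (Ioc 0 s) :=
    hUint.mul_continuousOn_of_subset
      (ContinuousOn.rpow_const (by fun_prop) fun τ hτ => Or.inl (by linarith [hτ.2]))
      measurableSet_Ioc isCompact_Icc Ioc_subset_Icc_self
  have hkernel : ∀ τ ∈ Ioc 1 s, s ^ (-α) * U τ ≤ U τ * (1 + s - τ) ^ (-α) := fun τ hτ => by
    rw [mul_comm]
    exact mul_le_mul_of_nonneg_left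
      (rpow_le_rpow_of_nonpos (by linarith [hτ.2]) (by linarith [hτ.1]) (by linarith))
      (hU τ (hIoc hτ))
  calc ∫ τ in Ioc 1 s, U τ
      = s ^ α * ∫ τ in Ioc 1 s, s ^ (-α) * U τ := by
        rw [integral_const_mul, ← mul_assoc, ← rpow_add hs0, add_neg_cancel, rpow_zero, one_mul]
    _ ≤ s ^ α * ∫ τ in Ioc 1 s, U τ * (1 + s - τ) ^ (-α) := by
        gcongr 1
        exact setIntegral_mono_on ((hUint.mono_set hIoc).const_mul _) (hint.mono_set hIoc)
          measurableSet_Ioc hkernel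
    _ ≤ s ^ α * ∫ τ in Ioc 0 s, U τ * (1 + s - τ) ^ (-α) := by
        gcongr 1
        refine setIntegral_mono_set hint ?_ hIoc.eventuallyLE
        filter_upwards [ae_restrict_mem measurableSet_Ioc] with τ hτ
        exact mul_nonneg (hU τ hτ) (rpow_nonneg (by linarith [hτ.2]) _)
    _ ≤ M * s ^ α := by
        rw [mul_comm]
        gcongr

theorem stmt_7_general (α : ℝ) (hα : α ∈ Set.Ioo (0:ℝ) 1)
    (u0 : ℝ → ℝ)
    (hu0pos : ∀ a > (0:ℝ), 0 ≤ u0 a)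
    (M : ℝ) (hM : M = ∫ a in Set.Ioi (0:ℝ), u0 a)
    (U : ℝ → ℝ) (hUpos : ∀ t > (0:ℝ), 0 ≤ U t)
    (hUloc : ∀ t > (0:ℝ), IntegrableOn U (Set.Ioc 0 t))
    (heq : ∀ t > (0:ℝ),
      (∫ τ in Set.Ioc (0:ℝ) t, U τ * (1 + t - τ) ^ (-α))
        = M - ∫ a in Set.Ioi (0:ℝ), u0 a * ((1 + a) / (1 + t + a)) ^ α) :
    ∀ δ ∈ Set.Ioo (0:ℝ) 1,
      (∫⁻ t in Set.Ioi (1:ℝ), ENNReal.ofReal (t ^ (-α - δ) * U t))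
        ≤ ENNReal.ofReal ((1 + α) * M / δ) := by
  rintro δ ⟨hδ0, hδ1⟩
  have hM0 : 0 ≤ M := hM ▸ setIntegral_nonneg measurableSet_Ioi hu0pos
  have hconv : ∀ s > (0 : ℝ), ∫ τ in Ioc 0 s, U τ * (1 + s - τ) ^ (-α) ≤ M := fun s hs => by
    have hdata : 0 ≤ ∫ a in Ioi 0, u0 a * ((1 + a) / (1 + s + a)) ^ α :=
      setIntegral_nonneg measurableSet_Ioi fun a (ha : 0 < a) =>
        mul_nonneg (hu0pos a ha) (rpow_nonneg (div_nonneg (by linarith) (by linarith)) _)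
    linarith [heq s hs]
  have hgrowth : ∀ s > (1 : ℝ),
      ∫⁻ t in Ioc 1 s, ENNReal.ofReal (U t) ≤ ENNReal.ofReal M * ENNReal.ofReal (s ^ α) := by
    intro s hs
    have hs0 : 0 < s := one_pos.trans hs
    rw [← ofReal_integral_eq_lintegral_ofReal
        ((hUloc s hs0).mono_set (Ioc_subset_Ioc_left zero_le_one))
        (ae_restrict_of_forall_mem measurableSet_Ioc fun t ht => hUpos t (one_pos.trans ht.1)),
      ← ENNReal.ofReal_mul hM0]
    exact ENNReal.ofReal_le_ofReal <| setIntegral_Ioc_one_le_of_renewal hα.1.le hs.le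
      (fun τ hτ => hUpos τ hτ.1) (hUloc s hs0) (hconv s hs0)
  have hU : AEMeasurable (fun t => ENNReal.ofReal (U t)) (volume.restrict (Ioi 1)) :=
    ((aestronglyMeasurable_restrict_Ioi_of_integrableOn_Ioc hUloc).mono_set
      (Ioi_subset_Ioi zero_le_one)).aemeasurable.ennreal_ofReal
  calc ∫⁻ t in Ioi 1, ENNReal.ofReal (t ^ (-α - δ) * U t)
      = ∫⁻ t in Ioi 1, ENNReal.ofReal (t ^ (-(α + δ))) * ENNReal.ofReal (U t) :=
        setLIntegral_congr_fun measurableSet_Ioi fun t (ht : 1 < t) => by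
          rw [neg_add', ENNReal.ofReal_mul (rpow_nonneg (by linarith) _)]
    _ ≤ ENNReal.ofReal M * ENNReal.ofReal ((α + δ) / (α + δ - α)) :=
        lintegral_Ioi_one_rpow_neg_mul_le_of_growth hU (by linarith [hα.1]) (by linarith) hgrowth
    _ ≤ ENNReal.ofReal ((1 + α) * M / δ) := by
        rw [← ENNReal.ofReal_mul hM0, add_sub_cancel_left, mul_div_assoc', mul_comm M]
        gcongr ENNReal.ofReal (?_ * M / δ)
        linarith

/-- Under the renewal integral equation for `U` with nonnegative
`u⁰ ∈ L¹(0,∞)` and mass `M`, for every `δ ∈ (0,1)`,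
`∫₁^∞ t^{-α-δ} U(t) dt ≤ (1+α) M / δ`. -/
theorem stmt_7 (α : ℝ) (hα : α ∈ Set.Ioo (0:ℝ) 1)
    (u0 : ℝ → ℝ) (hu0int : IntegrableOn u0 (Set.Ioi 0))
    (hu0pos : ∀ a > (0:ℝ), 0 ≤ u0 a)
    (M : ℝ) (hM : M = ∫ a in Set.Ioi (0:ℝ), u0 a)
    (U : ℝ → ℝ) (hUpos : ∀ t > (0:ℝ), 0 ≤ U t)
    (hUloc : ∀ t > (0:ℝ), IntegrableOn U (Set.Ioc 0 t))
    (heq : ∀ t > (0:ℝ),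
      (∫ τ in Set.Ioc (0:ℝ) t, U τ * (1 + t - τ) ^ (-α))
        = M - ∫ a in Set.Ioi (0:ℝ), u0 a * ((1 + a) / (1 + t + a)) ^ α) :
    ∀ δ ∈ Set.Ioo (0:ℝ) 1,
      (∫⁻ t in Set.Ioi (1:ℝ), ENNReal.ofReal (t ^ (-α - δ) * U t))
        ≤ ENNReal.ofReal ((1 + α) * M / δ) :=
  stmt_7_general α hα u0 hu0pos M hM U hUpos hUloc heq
end

section
/- Let 0 < α < 1, let u⁰ ∈ L¹(0,∞) be nonnegative, not almost everywhere zero, with M = ∫₀^∞ u⁰(a) da, and let U : (0,∞) → [0,∞) be locally integrable and satisfy, for all t > 0, ∫₀^t U(τ) (1+t-τ)^{-α} dτ = M − ∫₀^∞ u⁰(a) ((1+a)/(1+t+a))^α da. Then there exists a constant C₋ > 0, depending only on α and u⁰, such that for every δ ∈ (0,1), ∫₀^∞ t^{-α-δ} U(t) dt ≥ C₋ / δ. -/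
/-!
By dominated convergence the tail `∫ u⁰(a) ((1+a)/(1+t+a))^α da` tends to `0`, so the convolution
`∫₀^t U(τ) (1+t-τ)^{-α} dτ` is at least `M/2` for all `t ≥ T`. Integrating against `t^{-1-δ}` over
`(T, ∞)` gives at least `(M/2) T^{-δ}/δ`; by Tonelli the same quantity is
`∫ U(τ) ∫_τ^∞ t^{-1-δ} (1+t-τ)^{-α} dt dτ`, and splitting the inner integral at `t = 2τ` bounds it
by `(1/(1-α) + 2^α/α) τ^{-α-δ}`. As `T^{-δ} ≥ T^{-1}` for `δ < 1`, one can take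
`C₋ = M / (2 T (1/(1-α) + 2^α/α))`.
-/

open MeasureTheory Real Set Filter Topology
open scoped ENNReal

theorem ofReal_integral_le_lintegral_ofReal {α : Type*} [MeasurableSpace α] {μ : Measure α}
    (f : α → ℝ) : ENNReal.ofReal (∫ x, f x ∂μ) ≤ ∫⁻ x, ENNReal.ofReal (f x) ∂μ := by
  by_cases hf : Integrable f μ
  · rw [integral_eq_lintegral_pos_part_sub_lintegral_neg_part hf]
    exact (ENNReal.ofReal_le_ofReal (sub_le_self _ ENNReal.toReal_nonneg)).trans
      ENNReal.ofReal_toReal_le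
  · simp [integral_undef hf]

theorem aemeasurable_restrict_Ioi_of_integrableOn_Ioc {f : ℝ → ℝ} {a : ℝ}
    (hf : ∀ t > a, IntegrableOn f (Ioc a t)) : AEMeasurable f (volume.restrict (Ioi a)) := by
  have hIoi : ⋃ n : ℕ, Ioc a (a + (n + 1)) = Ioi a :=
    iUnion_Ioc_eq_Ioi_self_iff.2 fun x _ ↦
      (exists_nat_ge (x - a)).imp fun n hn ↦ by linarith
  rw [← hIoi, aemeasurable_iUnion_iff]
  exact fun n ↦ (hf _ (by linarith)).aestronglyMeasurable.aemeasurable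

theorem lintegral_Ioi_rpow_of_lt {p c : ℝ} (hp : p < -1) (hc : 0 < c) :
    ∫⁻ t in Ioi c, ENNReal.ofReal (t ^ p) = ENNReal.ofReal (-c ^ (p + 1) / (p + 1)) := by
  rw [← integral_Ioi_rpow_of_lt hp hc, ofReal_integral_eq_lintegral_ofReal
    (integrableOn_Ioi_rpow_of_lt hp hc)]
  filter_upwards [ae_restrict_mem measurableSet_Ioi] with t ht
  exact rpow_nonneg (hc.trans ht).le _

theorem lintegral_Ioc_sub_rpow_neg {α τ h : ℝ} (hα : α < 1) (hh : 0 ≤ h) :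
    ∫⁻ t in Ioc τ (τ + h), ENNReal.ofReal ((t - τ) ^ (-α))
      = ENNReal.ofReal (h ^ (1 - α) / (1 - α)) := by
  have hint : IntervalIntegrable (fun t ↦ (t - τ) ^ (-α)) volume τ (τ + h) := by
    simpa [add_comm] using (intervalIntegral.intervalIntegrable_rpow' (r := -α) (a := 0)
      (b := h) (by linarith)).comp_sub_right τ
  have hval : ∫ t in τ..τ + h, (t - τ) ^ (-α) = h ^ (1 - α) / (1 - α) := by
    rw [intervalIntegral.integral_comp_sub_right (fun x ↦ x ^ (-α)), sub_self,
      add_sub_cancel_left, integral_rpow (Or.inl (by linarith)),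
      zero_rpow (by linarith), sub_zero, neg_add_eq_sub]
  have hle : τ ≤ τ + h := by linarith
  rw [← hval, intervalIntegral.integral_of_le hle, ofReal_integral_eq_lintegral_ofReal
    ((intervalIntegrable_iff_integrableOn_Ioc_of_le hle).mp hint)]
  filter_upwards [ae_restrict_mem measurableSet_Ioc] with t ht
  exact rpow_nonneg (by linarith [ht.1]) _

theorem tendsto_setIntegral_mul_div_rpow_atTop {α : ℝ} (hα : 0 < α) {u : ℝ → ℝ}
    (hu : IntegrableOn u (Ioi 0)) :
    Tendsto (fun t ↦ ∫ a in Ioi 0, u a * ((1 + a) / (1 + t + a)) ^ α) atTop (𝓝 0) := by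
  have hratio (a : ℝ) : Tendsto (fun t : ℝ ↦ (1 + a) / (1 + t + a)) atTop (𝓝 0) :=
    tendsto_const_nhds.div_atTop <| tendsto_atTop_add_const_right _ a <|
      tendsto_atTop_add_const_left _ 1 tendsto_id
  have hrpow : Tendsto (fun x : ℝ ↦ x ^ α) (𝓝 0) (𝓝 0) := by
    simpa [zero_rpow hα.ne'] using (continuousAt_rpow_const 0 α (Or.inr hα.le)).tendsto
  simpa only [integral_zero] using tendsto_integral_filter_of_dominated_convergence
    (l := atTop) (F := fun t a ↦ u a * ((1 + a) / (1 + t + a)) ^ α) (f := fun _ ↦ 0) (fun a ↦ |u a|)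
    (Eventually.of_forall fun t ↦ hu.aestronglyMeasurable.mul
      (Measurable.aestronglyMeasurable (by fun_prop)))
    ((eventually_ge_atTop 0).mono fun t ht ↦ by
      filter_upwards [ae_restrict_mem measurableSet_Ioi] with a (ha : 0 < a)
      have hb0 : 0 ≤ (1 + a) / (1 + t + a) := by positivity
      have hb1 : (1 + a) / (1 + t + a) ≤ 1 := (div_le_one (by linarith)).2 (by linarith)
      rw [norm_mul, norm_of_nonneg (rpow_nonneg hb0 _), Real.norm_eq_abs]
      exact mul_le_of_le_one_right (abs_nonneg _) (rpow_le_one hb0 hb1 hα.le))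
    hu.abs
    (Eventually.of_forall fun a ↦ by simpa using (hrpow.comp (hratio a)).const_mul (u a))

section Kernel

variable {α δ τ : ℝ}

theorem lintegral_Ioc_rpow_mul_shift_rpow_le (hα₀ : 0 ≤ α) (hα : α < 1) (hδ : -1 ≤ δ)
    (hτ : 0 < τ) :
    ∫⁻ t in Ioc τ (2 * τ), ENNReal.ofReal (t ^ (-1 - δ)) * ENNReal.ofReal ((1 + t - τ) ^ (-α))
      ≤ ENNReal.ofReal (τ ^ (-α - δ) / (1 - α)) := by
  calc ∫⁻ t in Ioc τ (2 * τ), ENNReal.ofReal (t ^ (-1 - δ)) * ENNReal.ofReal ((1 + t - τ) ^ (-α))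
      ≤ ∫⁻ t in Ioc τ (τ + τ), ENNReal.ofReal (τ ^ (-1 - δ)) * ENNReal.ofReal ((t - τ) ^ (-α)) := by
        rw [two_mul]
        refine setLIntegral_mono' measurableSet_Ioc fun t ht ↦ mul_le_mul' ?_ ?_ <;>
          apply ENNReal.ofReal_le_ofReal
        · exact rpow_le_rpow_of_nonpos hτ ht.1.le (by linarith)
        · exact rpow_le_rpow_of_nonpos (by linarith [ht.1]) (by linarith) (by linarith)
    _ = ENNReal.ofReal (τ ^ (-1 - δ) * (τ ^ (1 - α) / (1 - α))) := by
        rw [lintegral_const_mul' _ _ ENNReal.ofReal_ne_top, lintegral_Ioc_sub_rpow_neg hα hτ.le,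
          ENNReal.ofReal_mul (rpow_nonneg hτ.le _)]
    _ = ENNReal.ofReal (τ ^ (-α - δ) / (1 - α)) := by
        rw [← mul_div_assoc, ← rpow_add hτ]
        ring_nf

theorem lintegral_Ioi_rpow_mul_shift_rpow_le (hα : 0 < α) (hδ : 0 ≤ δ) (hτ : 0 < τ) :
    ∫⁻ t in Ioi (2 * τ), ENNReal.ofReal (t ^ (-1 - δ)) * ENNReal.ofReal ((1 + t - τ) ^ (-α))
      ≤ ENNReal.ofReal (2 ^ α / α * τ ^ (-α - δ)) := by
  have hp : -1 - δ - α < -1 := by linarith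
  calc ∫⁻ t in Ioi (2 * τ), ENNReal.ofReal (t ^ (-1 - δ)) * ENNReal.ofReal ((1 + t - τ) ^ (-α))
      ≤ ∫⁻ t in Ioi (2 * τ), ENNReal.ofReal (2 ^ α) * ENNReal.ofReal (t ^ (-1 - δ - α)) := by
        refine setLIntegral_mono' measurableSet_Ioi fun t (ht : 2 * τ < t) ↦ ?_
        have ht0 : 0 < t := by linarith
        -- `2τ < t` gives `1 + t - τ ≥ t / 2`
        have hshift : (1 + t - τ) ^ (-α) ≤ 2 ^ α * t ^ (-α) := by
          calc (1 + t - τ) ^ (-α) ≤ (t / 2) ^ (-α) :=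
                rpow_le_rpow_of_nonpos (by linarith) (by linarith) (by linarith)
            _ = 2 ^ α * t ^ (-α) := by
                rw [div_rpow ht0.le zero_le_two, rpow_neg zero_le_two, div_inv_eq_mul, mul_comm]
        rw [← ENNReal.ofReal_mul (rpow_nonneg ht0.le _), ← ENNReal.ofReal_mul (by positivity)]
        refine ENNReal.ofReal_le_ofReal ?_
        calc t ^ (-1 - δ) * (1 + t - τ) ^ (-α) ≤ t ^ (-1 - δ) * (2 ^ α * t ^ (-α)) :=
              mul_le_mul_of_nonneg_left hshift (rpow_nonneg ht0.le _)
          _ = 2 ^ α * t ^ (-1 - δ - α) := by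
              rw [sub_eq_add_neg _ α, rpow_add ht0]
              ring
    _ = ENNReal.ofReal (2 ^ α * ((2 * τ) ^ (-δ - α) / (δ + α))) := by
        rw [lintegral_const_mul' _ _ ENNReal.ofReal_ne_top,
          lintegral_Ioi_rpow_of_lt hp (by positivity), ← ENNReal.ofReal_mul (by positivity)]
        congr 2
        rw [show -1 - δ - α + 1 = -(δ + α) by ring, div_neg, neg_div, neg_neg, neg_add']
    _ ≤ ENNReal.ofReal (2 ^ α / α * τ ^ (-α - δ)) := by
        refine ENNReal.ofReal_le_ofReal ?_
        have h2τ : (2 * τ) ^ (-δ - α) ≤ τ ^ (-δ - α) :=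
          rpow_le_rpow_of_nonpos hτ (by linarith) (by linarith)
        calc 2 ^ α * ((2 * τ) ^ (-δ - α) / (δ + α)) ≤ 2 ^ α * (τ ^ (-δ - α) / α) := by
              gcongr
              linarith
          _ = 2 ^ α / α * τ ^ (-α - δ) := by
              rw [sub_eq_add_neg (-δ), add_comm, ← sub_eq_add_neg]
              ring

theorem lintegral_Ici_rpow_mul_shift_rpow_le (hα₀ : 0 < α) (hα₁ : α < 1)
    (hδ : 0 ≤ δ) (hτ : 0 < τ) :
    ∫⁻ t in Ici τ, ENNReal.ofReal (t ^ (-1 - δ)) * ENNReal.ofReal ((1 + t - τ) ^ (-α))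
      ≤ ENNReal.ofReal (1 / (1 - α) + 2 ^ α / α) * ENNReal.ofReal (τ ^ (-α - δ)) := by
  have hα₁' : 0 < 1 - α := sub_pos.2 hα₁
  rw [← setLIntegral_congr Ioi_ae_eq_Ici, ← Ioc_union_Ioi_eq_Ioi (by linarith : τ ≤ 2 * τ)]
  calc _ ≤ _ + _ := lintegral_union_le _ _ _
    _ ≤ ENNReal.ofReal (τ ^ (-α - δ) / (1 - α)) + ENNReal.ofReal (2 ^ α / α * τ ^ (-α - δ)) :=
        add_le_add (lintegral_Ioc_rpow_mul_shift_rpow_le hα₀.le hα₁ (by linarith) hτ)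
          (lintegral_Ioi_rpow_mul_shift_rpow_le hα₀ hδ hτ)
    _ = _ := by
        rw [← ENNReal.ofReal_add (by positivity) (by positivity),
          ← ENNReal.ofReal_mul (by positivity)]
        ring_nf

end Kernel

theorem lintegral_mul_le_of_le_lintegral_Ioc {a : ℝ} {s : Set ℝ} (hs : MeasurableSet s)
    {c C : ℝ≥0∞} (hC : C ≠ ∞) {u v w : ℝ → ℝ≥0∞} {K : ℝ → ℝ → ℝ≥0∞}
    (hu : AEMeasurable u (volume.restrict (Ioi a))) (hw : Measurable w)
    (hK : Measurable (Function.uncurry K))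
    (hconv : ∀ t ∈ s, c ≤ ∫⁻ τ in Ioc a t, u τ * K t τ)
    (hkernel : ∀ τ > a, ∫⁻ t in Ici τ, w t * K t τ ≤ C * v τ) :
    c * ∫⁻ t in s, w t ≤ C * ∫⁻ τ in Ioi a, u τ * v τ := by
  set F : ℝ → ℝ → ℝ≥0∞ := fun t τ ↦ if τ ≤ t then w t * (u τ * K t τ) else 0
  have hF : AEMeasurable (Function.uncurry F) (volume.prod (volume.restrict (Ioi a))) := by
    have : Function.uncurry F =
        {p : ℝ × ℝ | p.2 ≤ p.1}.indicator fun p ↦ w p.1 * (u p.2 * K p.1 p.2) := by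
      ext ⟨t, τ⟩
      simp [F, indicator]
    rw [this]
    exact ((hw.comp measurable_fst).aemeasurable.mul (hu.comp_snd.mul hK.aemeasurable)).indicator
      (measurableSet_le measurable_snd measurable_fst)
  have hrow (t : ℝ) : w t * ∫⁻ τ in Ioc a t, u τ * K t τ ≤ ∫⁻ τ in Ioi a, F t τ := by
    rw [← Iic_inter_Ioi, ← Measure.restrict_restrict measurableSet_Iic,
      ← lintegral_indicator measurableSet_Iic]
    refine (lintegral_const_mul_le _ _).trans (lintegral_mono fun τ ↦ ?_)
    by_cases h : τ ≤ t <;> simp [F, h]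
  have hcol (τ : ℝ) : ∫⁻ t, F t τ = u τ * ∫⁻ t in Ici τ, w t * K t τ := by
    have hmeas : Measurable fun t ↦ w t * K t τ := hw.mul hK.of_uncurry_right
    rw [← lintegral_const_mul _ hmeas, ← lintegral_indicator measurableSet_Ici]
    congr 1
    ext t
    by_cases h : τ ≤ t <;> simp [F, h, mul_left_comm]
  calc c * ∫⁻ t in s, w t = ∫⁻ t in s, w t * c := by
        rw [← lintegral_const_mul _ hw]
        simp_rw [mul_comm]
    _ ≤ ∫⁻ t in s, w t * ∫⁻ τ in Ioc a t, u τ * K t τ :=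
        setLIntegral_mono' hs fun t ht ↦ mul_le_mul_right (hconv t ht) _
    _ ≤ ∫⁻ t, ∫⁻ τ in Ioi a, F t τ :=
        (setLIntegral_le_lintegral _ _).trans (lintegral_mono hrow)
    _ = ∫⁻ τ in Ioi a, u τ * ∫⁻ t in Ici τ, w t * K t τ := by
        rw [lintegral_lintegral_swap hF]
        simp_rw [hcol]
    _ ≤ ∫⁻ τ in Ioi a, u τ * (C * v τ) :=
        setLIntegral_mono' measurableSet_Ioi fun τ hτ ↦ mul_le_mul_right (hkernel τ hτ) _
    _ = C * ∫⁻ τ in Ioi a, u τ * v τ := by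
        rw [← lintegral_const_mul' _ _ hC]
        simp_rw [mul_left_comm]

theorem lintegral_rpow_mul_ge_of_le_convolution {α δ c T : ℝ} (hα₀ : 0 < α) (hα₁ : α < 1)
    (hδ : 0 < δ) (hT : 0 < T) {U : ℝ → ℝ} (hU : AEMeasurable U (volume.restrict (Ioi 0)))
    (hconv : ∀ t ∈ Ioi T, ENNReal.ofReal c
      ≤ ∫⁻ τ in Ioc 0 t, ENNReal.ofReal (U τ) * ENNReal.ofReal ((1 + t - τ) ^ (-α))) :
    ENNReal.ofReal c * ENNReal.ofReal (T ^ (-δ) / δ)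
      ≤ ENNReal.ofReal (1 / (1 - α) + 2 ^ α / α)
        * ∫⁻ t in Ioi 0, ENNReal.ofReal (t ^ (-α - δ) * U t) := by
  have hweight : ∫⁻ t in Ioi T, ENNReal.ofReal (t ^ (-1 - δ)) = ENNReal.ofReal (T ^ (-δ) / δ) := by
    rw [lintegral_Ioi_rpow_of_lt (by linarith) hT, show -1 - δ + 1 = -δ by ring, div_neg, neg_div,
      neg_neg]
  have hswap := lintegral_mul_le_of_le_lintegral_Ioc measurableSet_Ioi ENNReal.ofReal_ne_top
    hU.ennreal_ofReal (by fun_prop) (K := fun t τ ↦ ENNReal.ofReal ((1 + t - τ) ^ (-α)))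
    (by fun_prop) hconv fun τ hτ ↦ lintegral_Ici_rpow_mul_shift_rpow_le hα₀ hα₁ hδ.le hτ
  rw [hweight] at hswap
  refine hswap.trans_eq (congrArg _ (setLIntegral_congr_fun measurableSet_Ioi fun t ht ↦ ?_))
  rw [ENNReal.ofReal_mul (rpow_nonneg (le_of_lt ht) _), mul_comm]

theorem stmt_8_general (α : ℝ) (hα : α ∈ Set.Ioo (0:ℝ) 1)
    (u0 : ℝ → ℝ) (hu0int : IntegrableOn u0 (Set.Ioi 0))
    (hu0pos : ∀ a > (0:ℝ), 0 ≤ u0 a)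
    (hu0ne : ¬ (∀ᵐ a ∂(volume.restrict (Set.Ioi (0:ℝ))), u0 a = 0))
    (M : ℝ) (hM : M = ∫ a in Set.Ioi (0:ℝ), u0 a)
    (U : ℝ → ℝ)
    (hUloc : ∀ t > (0:ℝ), IntegrableOn U (Set.Ioc 0 t))
    (heq : ∀ t > (0:ℝ),
      (∫ τ in Set.Ioc (0:ℝ) t, U τ * (1 + t - τ) ^ (-α))
        = M - ∫ a in Set.Ioi (0:ℝ), u0 a * ((1 + a) / (1 + t + a)) ^ α) :
    ∃ C > (0:ℝ), ∀ δ ∈ Set.Ioo (0:ℝ) 1,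
      ENNReal.ofReal (C / δ)
        ≤ ∫⁻ t in Set.Ioi (0:ℝ), ENNReal.ofReal (t ^ (-α - δ) * U t) := by
  obtain ⟨hα₀, hα₁⟩ := hα
  have hMpos : 0 < M := by
    rw [hM, integral_pos_iff_support_of_nonneg_ae
      (ae_restrict_of_forall_mem measurableSet_Ioi hu0pos) hu0int]
    rw [ae_iff] at hu0ne
    exact pos_iff_ne_zero.2 hu0ne
  obtain ⟨T, hT⟩ := (((tendsto_setIntegral_mul_div_rpow_atTop hα₀ hu0int).eventually_lt_const
    (half_pos hMpos)).and (eventually_ge_atTop 1)).exists_forall_of_atTop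
  have hT₁ : 1 ≤ T := (hT T le_rfl).2
  have hconv (t : ℝ) (ht : t ∈ Ioi T) : ENNReal.ofReal (M / 2)
      ≤ ∫⁻ τ in Ioc 0 t, ENNReal.ofReal (U τ) * ENNReal.ofReal ((1 + t - τ) ^ (-α)) := by
    calc ENNReal.ofReal (M / 2) ≤ ENNReal.ofReal (∫ τ in Ioc 0 t, U τ * (1 + t - τ) ^ (-α)) := by
          rw [heq t (by linarith [mem_Ioi.1 ht])]
          exact ENNReal.ofReal_le_ofReal (by linarith [(hT t (mem_Ioi.1 ht).le).1])
      _ ≤ _ := ofReal_integral_le_lintegral_ofReal _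
      _ = _ := setLIntegral_congr_fun measurableSet_Ioc fun τ hτ ↦
          ENNReal.ofReal_mul' (rpow_nonneg (by linarith [hτ.2]) _)
  set C₀ : ℝ := 1 / (1 - α) + 2 ^ α / α
  have hC₀ : 0 < C₀ := add_pos (one_div_pos.2 (sub_pos.2 hα₁)) (by positivity)
  refine ⟨M / 2 / (T * C₀), by positivity, fun δ ⟨hδ₀, hδ₁⟩ ↦ ?_⟩
  have key := lintegral_rpow_mul_ge_of_le_convolution hα₀ hα₁ hδ₀ (by linarith)
    (aemeasurable_restrict_Ioi_of_integrableOn_Ioc hUloc) hconv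
  refine (ENNReal.mul_le_mul_iff_right (ENNReal.ofReal_pos.2 hC₀).ne' ENNReal.ofReal_ne_top).1
    (le_trans ?_ key)
  rw [← ENNReal.ofReal_mul hC₀.le, ← ENNReal.ofReal_mul (by linarith)]
  refine ENNReal.ofReal_le_ofReal ?_
  have hTδ : T⁻¹ ≤ T ^ (-δ) := by
    rw [← rpow_neg_one]
    exact rpow_le_rpow_of_exponent_le hT₁ (by linarith)
  calc C₀ * (M / 2 / (T * C₀) / δ) = M / 2 * (T⁻¹ / δ) := by field_simp
    _ ≤ M / 2 * (T ^ (-δ) / δ) := by gcongr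

/-- Under the renewal integral equation for `U` with nonnegative
`u⁰ ∈ L¹(0,∞)` not a.e. zero and mass `M`, there exists `C₋ > 0`, depending only on
`α` and `u⁰`, such that for every `δ ∈ (0,1)`, `∫₀^∞ t^{-α-δ} U(t) dt ≥ C₋/δ`. -/
theorem stmt_8 (α : ℝ) (hα : α ∈ Set.Ioo (0:ℝ) 1)
    (u0 : ℝ → ℝ) (hu0int : IntegrableOn u0 (Set.Ioi 0))
    (hu0pos : ∀ a > (0:ℝ), 0 ≤ u0 a)
    (hu0ne : ¬ (∀ᵐ a ∂(volume.restrict (Set.Ioi (0:ℝ))), u0 a = 0))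
    (M : ℝ) (hM : M = ∫ a in Set.Ioi (0:ℝ), u0 a)
    (U : ℝ → ℝ) (hUpos : ∀ t > (0:ℝ), 0 ≤ U t)
    (hUloc : ∀ t > (0:ℝ), IntegrableOn U (Set.Ioc 0 t))
    (heq : ∀ t > (0:ℝ),
      (∫ τ in Set.Ioc (0:ℝ) t, U τ * (1 + t - τ) ^ (-α))
        = M - ∫ a in Set.Ioi (0:ℝ), u0 a * ((1 + a) / (1 + t + a)) ^ α) :
    ∃ C > (0:ℝ), ∀ δ ∈ Set.Ioo (0:ℝ) 1,
      ENNReal.ofReal (C / δ)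
        ≤ ∫⁻ t in Set.Ioi (0:ℝ), ENNReal.ofReal (t ^ (-α - δ) * U t) :=
  stmt_8_general α hα u0 hu0int hu0pos hu0ne M hM U hUloc heq
end

section
/- Let 0 < α < 1, ε > 0 and s > 0. Then 0 ≤ Γ(1-α) s^{α-1} − ∫₀^∞ e^{-st} (ε + t)^{-α} dt ≤ ε^{1-α} / (1-α), where Γ(1-α) s^{α-1} = ∫₀^∞ e^{-st} t^{-α} dt. -/
/-!
Since `∫₀^∞ e^{-st} t^{-α} dt = Γ(1-α) s^{α-1}`, the quantity to bound is the Laplace transform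
`∫₀^∞ e^{-st} g(t) dt` of the kernel gap `g(t) = t^{-α} - (ε+t)^{-α}`. The gap is nonnegative and,
as `0 ≤ e^{-st} ≤ 1`, its Laplace transform lies between `0` and `∫₀^∞ g`. The latter integral
is computed from the primitive `(t^{1-α} - (ε+t)^{1-α})/(1-α)`, which vanishes at infinity by
Bernoulli's inequality and equals `-ε^{1-α}/(1-α)` at `0`.
-/

open MeasureTheory Real Set Filter Topology

section KernelGap

variable {α ε : ℝ}

lemma rpow_neg_sub_rpow_neg_add_nonneg (hα : 0 ≤ α) (hε : 0 ≤ ε) {t : ℝ} (ht : 0 < t) :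
    0 ≤ t ^ (-α) - (ε + t) ^ (-α) :=
  sub_nonneg.2 <| rpow_le_rpow_of_nonpos ht (by linarith) (by linarith)

lemma add_rpow_one_sub_le (hα0 : 0 ≤ α) (hα1 : α ≤ 1) (hε : 0 ≤ ε) {t : ℝ} (ht : 0 < t) :
    (ε + t) ^ (1 - α) ≤ t ^ (1 - α) + (1 - α) * ε * t ^ (-α) := by
  have hbern : (1 + ε / t) ^ (1 - α) ≤ 1 + (1 - α) * (ε / t) :=
    rpow_one_add_le_one_add_mul_self (by linarith [div_nonneg hε ht.le]) (by linarith)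
      (by linarith)
  have hpow : t ^ (1 - α) / t = t ^ (-α) := by
    rw [rpow_sub ht, rpow_one, rpow_neg ht.le]
    field_simp
  calc (ε + t) ^ (1 - α) = t ^ (1 - α) * (1 + ε / t) ^ (1 - α) := by
        rw [← mul_rpow ht.le (by positivity)]
        congr 1
        field_simp
        ring
    _ ≤ t ^ (1 - α) * (1 + (1 - α) * (ε / t)) := by gcongr
    _ = t ^ (1 - α) + (1 - α) * ε * (t ^ (1 - α) / t) := by ring
    _ = t ^ (1 - α) + (1 - α) * ε * t ^ (-α) := by rw [hpow]

variable (α ε) in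
noncomputable def kernelGapPrimitive (t : ℝ) : ℝ :=
  (t ^ (1 - α) - (ε + t) ^ (1 - α)) / (1 - α)

lemma hasDerivAt_kernelGapPrimitive (hα : α ≠ 1) (hε : 0 ≤ ε) {t : ℝ} (ht : 0 < t) :
    HasDerivAt (kernelGapPrimitive α ε) (t ^ (-α) - (ε + t) ^ (-α)) t := by
  have hpow := hasDerivAt_rpow_const (p := 1 - α) (Or.inl ht.ne')
  have hshift := (hasDerivAt_rpow_const (p := 1 - α) (Or.inl (by positivity : ε + t ≠ 0))).comp t
    ((hasDerivAt_id t).const_add ε)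
  refine ((hpow.sub hshift).div_const (1 - α)).congr_deriv ?_
  rw [sub_sub_cancel_left, mul_one, ← mul_sub, mul_div_cancel_left₀ _ (sub_ne_zero.2 hα.symm)]

lemma continuous_kernelGapPrimitive (hα : α ≤ 1) : Continuous (kernelGapPrimitive α ε) := by
  have := continuous_rpow_const (q := 1 - α) (by linarith)
  unfold kernelGapPrimitive
  fun_prop

lemma kernelGapPrimitive_zero (hα : α < 1) :
    kernelGapPrimitive α ε 0 = -(ε ^ (1 - α) / (1 - α)) := by
  simp [kernelGapPrimitive, zero_rpow (by linarith : 1 - α ≠ 0), neg_div]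

lemma tendsto_kernelGapPrimitive_atTop (hα0 : 0 < α) (hα1 : α < 1) (hε : 0 ≤ ε) :
    Tendsto (kernelGapPrimitive α ε) atTop (𝓝 0) := by
  have h1α : 0 < 1 - α := by linarith
  have hlower : Tendsto (fun t => -(ε * t ^ (-α))) atTop (𝓝 0) := by
    simpa using ((tendsto_rpow_neg_atTop hα0).const_mul ε).neg
  refine tendsto_of_tendsto_of_tendsto_of_le_of_le' hlower tendsto_const_nhds ?_ ?_
  · filter_upwards [eventually_gt_atTop 0] with t ht
    rw [kernelGapPrimitive, le_div_iff₀ h1α]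
    nlinarith [add_rpow_one_sub_le hα0.le hα1.le hε ht]
  · filter_upwards [eventually_gt_atTop 0] with t ht
    refine div_nonpos_of_nonpos_of_nonneg (sub_nonpos.2 ?_) h1α.le
    exact rpow_le_rpow ht.le (by linarith) h1α.le

lemma integrableOn_rpow_neg_sub_rpow_neg_add (hα0 : 0 < α) (hα1 : α < 1) (hε : 0 ≤ ε) :
    IntegrableOn (fun t => t ^ (-α) - (ε + t) ^ (-α)) (Ioi 0) :=
  integrableOn_Ioi_deriv_of_nonneg (continuous_kernelGapPrimitive hα1.le).continuousWithinAt
    (fun _ ht => hasDerivAt_kernelGapPrimitive hα1.ne hε ht)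
    (fun _ ht => rpow_neg_sub_rpow_neg_add_nonneg hα0.le hε ht)
    (tendsto_kernelGapPrimitive_atTop hα0 hα1 hε)

lemma integral_rpow_neg_sub_rpow_neg_add (hα0 : 0 < α) (hα1 : α < 1) (hε : 0 ≤ ε) :
    ∫ t in Ioi 0, (t ^ (-α) - (ε + t) ^ (-α)) = ε ^ (1 - α) / (1 - α) := by
  rw [integral_Ioi_of_hasDerivAt_of_nonneg
    (continuous_kernelGapPrimitive hα1.le).continuousWithinAt
    (fun _ ht => hasDerivAt_kernelGapPrimitive hα1.ne hε ht)
    (fun _ ht => rpow_neg_sub_rpow_neg_add_nonneg hα0.le hε ht)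
    (tendsto_kernelGapPrimitive_atTop hα0 hα1 hε), kernelGapPrimitive_zero hα1, sub_neg_eq_add,
    zero_add]

end KernelGap

section Laplace

variable {s : ℝ}

lemma integrableOn_exp_neg_mul_mul {g : ℝ → ℝ} (hs : 0 ≤ s) (hg : IntegrableOn g (Ioi 0)) :
    IntegrableOn (fun t => exp (-(s * t)) * g t) (Ioi 0) := by
  refine hg.bdd_mul (c := 1) (by fun_prop) ?_
  filter_upwards [ae_restrict_mem measurableSet_Ioi] with t ht
  rw [norm_of_nonneg (exp_pos _).le, exp_le_one_iff, neg_nonpos]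
  exact mul_nonneg hs (le_of_lt ht)

lemma setIntegral_exp_neg_mul_mul_le {g : ℝ → ℝ} (hs : 0 ≤ s) (hg : IntegrableOn g (Ioi 0))
    (hg0 : ∀ t ∈ Ioi (0 : ℝ), 0 ≤ g t) :
    ∫ t in Ioi 0, exp (-(s * t)) * g t ≤ ∫ t in Ioi 0, g t := by
  refine setIntegral_mono_on (integrableOn_exp_neg_mul_mul hs hg) hg measurableSet_Ioi
    fun t ht => mul_le_of_le_one_left (hg0 t ht) ?_
  rw [exp_le_one_iff, neg_nonpos]
  exact mul_nonneg hs (le_of_lt ht)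

lemma integrableOn_exp_neg_mul_mul_rpow_neg {α : ℝ} (hα : α < 1) (hs : 0 < s) :
    IntegrableOn (fun t => exp (-(s * t)) * t ^ (-α)) (Ioi 0) := by
  refine (integrableOn_rpow_mul_exp_neg_mul_rpow (by linarith : -1 < -α) one_pos hs).congr_fun
    (fun t _ => ?_) measurableSet_Ioi
  dsimp only
  rw [rpow_one, neg_mul, mul_comm]

lemma integral_exp_neg_mul_mul_rpow_neg {α : ℝ} (hα : α < 1) (hs : 0 < s) :
    ∫ t in Ioi 0, exp (-(s * t)) * t ^ (-α) = Gamma (1 - α) * s ^ (α - 1) := by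
  have hpow : (1 / s) ^ (1 - α) = s ^ (α - 1) := by
    rw [one_div, inv_rpow hs.le, ← rpow_neg hs.le, neg_sub]
  rw [mul_comm, ← hpow, ← integral_rpow_mul_exp_neg_mul_Ioi (by linarith) hs]
  refine setIntegral_congr_fun measurableSet_Ioi fun t _ => ?_
  simp only [sub_sub_cancel_left, mul_comm]

end Laplace

/-- For `0 < α < 1`, `ε > 0`, `s > 0`,
`0 ≤ Γ(1-α) s^{α-1} − ∫₀^∞ e^{-st}(ε+t)^{-α} dt ≤ ε^{1-α}/(1-α)`, where
`Γ(1-α) s^{α-1} = ∫₀^∞ e^{-st} t^{-α} dt`. -/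
theorem stmt_12 (α : ℝ) (hα : α ∈ Set.Ioo (0:ℝ) 1) (ε : ℝ) (hε : 0 < ε)
    (s : ℝ) (hs : 0 < s) :
    (0 ≤ Real.Gamma (1 - α) * s ^ (α - 1)
        - ∫ t in Set.Ioi (0:ℝ), Real.exp (-(s * t)) * (ε + t) ^ (-α)) ∧
    (Real.Gamma (1 - α) * s ^ (α - 1)
        - (∫ t in Set.Ioi (0:ℝ), Real.exp (-(s * t)) * (ε + t) ^ (-α))
      ≤ ε ^ (1 - α) / (1 - α)) ∧
    Real.Gamma (1 - α) * s ^ (α - 1)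
      = ∫ t in Set.Ioi (0:ℝ), Real.exp (-(s * t)) * t ^ (-α) := by
  obtain ⟨hα0, hα1⟩ := hα
  have hgap := integrableOn_rpow_neg_sub_rpow_neg_add hα0 hα1 hε.le
  have hLaplace := integral_exp_neg_mul_mul_rpow_neg hα1 hs
  have hsplit : ∫ t in Ioi 0, exp (-(s * t)) * (ε + t) ^ (-α)
      = (∫ t in Ioi 0, exp (-(s * t)) * t ^ (-α))
        - ∫ t in Ioi 0, exp (-(s * t)) * (t ^ (-α) - (ε + t) ^ (-α)) := by
    rw [← integral_sub (integrableOn_exp_neg_mul_mul_rpow_neg hα1 hs)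
      (integrableOn_exp_neg_mul_mul hs.le hgap)]
    congr 1 with t
    ring
  rw [hsplit, hLaplace, sub_sub_cancel]
  refine ⟨setIntegral_nonneg measurableSet_Ioi fun t ht =>
      mul_nonneg (exp_pos _).le (rpow_neg_sub_rpow_neg_add_nonneg hα0.le hε.le ht), ?_, rfl⟩
  rw [← integral_rpow_neg_sub_rpow_neg_add hα0 hα1 hε.le]
  exact setIntegral_exp_neg_mul_mul_le hs.le hgap
    fun t ht => rpow_neg_sub_rpow_neg_add_nonneg hα0.le hε.le ht
end

section
/- Let 0 < α < 1 and let v : [0,∞) → ℝ be continuously differentiable with v(0) = 0. Then for every t > 0, the function F(t) = ∫₀^t v(τ) (t-τ)^{-α} dτ is differentiable at t and F'(t) = v(t) t^{-α} − α ∫₀^t (v(t-s) − v(t)) s^{-α-1} ds. -/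
/-!
Extend `v|[0, T]` (for some `T > t`) by constants to a globally Lipschitz function `u`; since
`v 0 = 0`, `u` vanishes on `(-∞, 0]`, so near `t` the substitution `τ = r - s` writes
`F r = ∫₀^T u (r - s) s^{-α} ds` over a fixed domain. The integrand is Lipschitz in `r` with the
integrable constant `L s^{-α}`, so we may differentiate under the integral sign and get
`F' t = ∫₀^t v' (t - s) s^{-α} ds`. Integrating by parts against `s^{-α}`, with the boundary term
at `0` vanishing because `|v (t - s) - v t| ≤ C s`, turns this into the stated formula.
-/

open MeasureTheory Real Set Filter Topology

section IccExtend

variable {a b : ℝ} (h : a ≤ b)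

theorem LipschitzOnWith.lipschitzWith_IccExtend {f : ℝ → ℝ} {K : NNReal}
    (hf : LipschitzOnWith K f (Icc a b)) :
    LipschitzWith K (IccExtend h ((Icc a b).domRestrict f)) :=
  mul_one K ▸ hf.to_restrict.comp (LipschitzWith.projIcc h)

theorem HasDerivWithinAt.hasDerivAt_IccExtend {f : ℝ → ℝ} {f' x : ℝ}
    (hf : HasDerivWithinAt f f' (Icc a b) x) (hx : x ∈ Ioo a b) :
    HasDerivAt (IccExtend h ((Icc a b).domRestrict f)) f' x := by
  refine (hf.hasDerivAt (Icc_mem_nhds hx.1 hx.2)).congr_of_eventuallyEq ?_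
  filter_upwards [Icc_mem_nhds hx.1 hx.2] with y hy
  rw [IccExtend_of_mem h _ hy, domRestrict_apply]

theorem hasDerivAt_IccExtend_of_lt (g : Icc a b → ℝ) {x : ℝ} (hx : x < a) :
    HasDerivAt (IccExtend h g) 0 x := by
  refine (hasDerivAt_const x (g ⟨a, left_mem_Icc.2 h⟩)).congr_of_eventuallyEq ?_
  filter_upwards [Iio_mem_nhds hx] with y hy
  exact IccExtend_of_le_left h g hy.le

end IccExtend

theorem hasDerivAt_integral_comp_sub_mul {μ : Measure ℝ} {u k : ℝ → ℝ} {L : NNReal} {t : ℝ}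
    (hu : LipschitzWith L u) (hk : Integrable k μ)
    (hint : Integrable (fun s => u (t - s) * k s) μ)
    (hdiff : ∀ᵐ s ∂μ, DifferentiableAt ℝ u (t - s)) :
    HasDerivAt (fun r => ∫ s, u (r - s) * k s ∂μ) (∫ s, deriv u (t - s) * k s ∂μ) t := by
  refine (hasDerivAt_integral_of_dominated_loc_of_lip (bound := fun s => L * |k s|) univ_mem
    (Eventually.of_forall fun r => ?_) hint ?_ (Eventually.of_forall fun s => ?_)
    (hk.abs.const_mul L) ?_).2
  · exact (hu.continuous.comp (continuous_const.sub continuous_id)).aestronglyMeasurable.mul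
      hk.aestronglyMeasurable
  · exact ((measurable_deriv u).comp (measurable_const.sub measurable_id)).aestronglyMeasurable.mul
      hk.aestronglyMeasurable
  · refine (LipschitzWith.of_dist_le_mul fun x y => ?_).lipschitzOnWith
    rw [Real.coe_nnabs, abs_of_nonneg (by positivity), dist_eq_norm, ← sub_mul, norm_mul,
      ← dist_eq_norm, mul_right_comm, Real.norm_eq_abs]
    gcongr
    simpa using hu.dist_le_mul (x - s) (y - s)
  · filter_upwards [hdiff] with s hs
    exact (hs.hasDerivAt.comp_sub_const t s).mul_const (k s)

section LinearBound

variable {f : ℝ → ℝ} {α t C : ℝ}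

theorem continuousOn_mul_rpow_neg_of_abs_le (hα : α < 1) (hf : ContinuousOn f (Icc 0 t))
    (hlin : ∀ s ∈ Icc 0 t, |f s| ≤ C * s) :
    ContinuousOn (fun s => f s * s ^ (-α)) (Icc 0 t) := by
  have hα' : 1 - α ≠ 0 := by linarith
  have hbound : ∀ x ∈ Icc 0 t, ‖f x * x ^ (-α)‖ ≤ C * x ^ (1 - α) := fun x hx => by
    rcases hx.1.eq_or_lt with rfl | hx0
    · have : f 0 = 0 := by simpa using hlin 0 hx
      simp [this, zero_rpow hα']
    rw [norm_mul, Real.norm_eq_abs, Real.norm_of_nonneg (rpow_nonneg hx.1 _)]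
    calc |f x| * x ^ (-α) ≤ C * x * x ^ (-α) :=
          mul_le_mul_of_nonneg_right (hlin x hx) (rpow_nonneg hx.1 _)
      _ = C * x ^ (1 - α) := by
          rw [mul_assoc, ← rpow_one_add' hx.1 (by linarith), ← sub_eq_add_neg]
  intro s hs
  rcases hs.1.eq_or_lt with rfl | hs0
  · have hg0 : f 0 * (0 : ℝ) ^ (-α) = 0 :=
      norm_le_zero_iff.1 (by simpa [zero_rpow hα'] using hbound 0 hs)
    have hlim : Tendsto (fun x : ℝ => C * x ^ (1 - α)) (𝓝[Icc 0 t] 0) (𝓝 0) := by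
      simpa [zero_rpow hα'] using
        ((continuousAt_rpow_const 0 (1 - α) (Or.inr (by linarith))).const_mul C).tendsto.mono_left
          nhdsWithin_le_nhds
    rw [ContinuousWithinAt, hg0]
    exact squeeze_zero_norm' (eventually_nhdsWithin_of_forall hbound) hlim
  · exact (hf s hs).mul (continuousAt_rpow_const s _ (Or.inl hs0.ne')).continuousWithinAt

theorem integrableOn_mul_rpow_neg_sub_one_of_abs_le (hα : α < 1) (ht : 0 < t)
    (hf : ContinuousOn f (Icc 0 t)) (hlin : ∀ s ∈ Icc 0 t, |f s| ≤ C * s) :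
    IntegrableOn (fun s => f s * s ^ (-α - 1)) (Ioo 0 t) := by
  have hpow : IntegrableOn (fun s => s ^ (-α)) (Ioo 0 t) :=
    (intervalIntegral.integrableOn_Ioo_rpow_iff ht).2 (by linarith)
  refine Integrable.mono' (hpow.const_mul C) ?_ ?_
  · refine ContinuousOn.aestronglyMeasurable ?_ measurableSet_Ioo
    exact (hf.mono Ioo_subset_Icc_self).mul
      fun s hs => (continuousAt_rpow_const s _ (Or.inl hs.1.ne')).continuousWithinAt
  · filter_upwards [ae_restrict_mem measurableSet_Ioo] with s hs
    rw [norm_mul, Real.norm_eq_abs, Real.norm_of_nonneg (rpow_nonneg hs.1.le _)]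
    calc |f s| * s ^ (-α - 1) ≤ C * s * s ^ (-α - 1) :=
          mul_le_mul_of_nonneg_right (hlin s (Ioo_subset_Icc_self hs)) (rpow_nonneg hs.1.le _)
      _ = C * s ^ (-α) := by
          rw [mul_assoc, mul_comm s, ← rpow_add_one hs.1.ne', sub_add_cancel]

end LinearBound

theorem integral_Ioo_deriv_mul_rpow_neg {f f' : ℝ → ℝ} {α t : ℝ} (hα : α < 1) (ht : 0 < t)
    (hf : ∀ s ∈ Icc 0 t, HasDerivWithinAt f (f' s) (Icc 0 t) s)
    (hf' : ContinuousOn f' (Icc 0 t)) (hf0 : f 0 = 0) :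
    ∫ s in Ioo 0 t, f' s * s ^ (-α)
      = f t * t ^ (-α) + α * ∫ s in Ioo 0 t, f s * s ^ (-α - 1) := by
  obtain ⟨C, hC⟩ := isCompact_Icc.exists_bound_of_continuousOn hf'
  have hcont : ContinuousOn f (Icc 0 t) := fun s hs => (hf s hs).continuousWithinAt
  have hlin : ∀ s ∈ Icc 0 t, |f s| ≤ C * s := fun s hs => by
    simpa [hf0] using norm_image_sub_le_of_norm_deriv_le_segment' hf
      (fun x hx => hC x (Ico_subset_Icc_self hx)) s hs
  have hI₁ : IntegrableOn (fun s => f' s * s ^ (-α)) (Ioo 0 t) :=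
    ((intervalIntegral.integrableOn_Ioo_rpow_iff ht).2 (by linarith)).continuousOn_mul_of_subset
      hf' isCompact_Icc measurableSet_Ioo Ioo_subset_Icc_self
  have hI₂ := integrableOn_mul_rpow_neg_sub_one_of_abs_le hα ht hcont hlin
  have hderiv : ∀ s ∈ Ioo 0 t, HasDerivAt (fun s => f s * s ^ (-α))
      (f' s * s ^ (-α) - α * (f s * s ^ (-α - 1))) s := fun s hs => by
    refine (((hf s (Ioo_subset_Icc_self hs)).hasDerivAt (Icc_mem_nhds hs.1 hs.2)).mul
      (hasDerivAt_rpow_const (p := -α) (Or.inl hs.1.ne'))).congr_deriv ?_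
    ring
  have hFTC := intervalIntegral.integral_eq_sub_of_hasDerivAt_of_le ht.le
    (continuousOn_mul_rpow_neg_of_abs_le hα hcont hlin) hderiv
    ((intervalIntegrable_iff_integrableOn_Ioo_of_le ht.le).2 (hI₁.sub (hI₂.const_mul α)))
  rw [intervalIntegral.integral_of_le ht.le, integral_Ioc_eq_integral_Ioo,
    integral_sub hI₁ (hI₂.const_mul α), integral_const_mul] at hFTC
  simp only [hf0, zero_mul, sub_zero] at hFTC
  linarith

theorem integral_Ioo_mul_comp_sub_eq {v u k : ℝ → ℝ} {r R : ℝ} (hr : 0 ≤ r) (hrR : r ≤ R)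
    (huv : EqOn u v (Ioo 0 r)) (hu : ∀ x ≤ 0, u x = 0) :
    ∫ τ in Ioo 0 r, v τ * k (r - τ) = ∫ s in Ioo 0 R, u (r - s) * k s := by
  rw [setIntegral_eq_of_subset_of_forall_sdiff_eq_zero measurableSet_Ioo
      (Ioo_subset_Ioo_right hrR) fun s hs => ?_,
    ← setIntegral_congr_fun measurableSet_Ioo fun τ hτ => congrArg (· * k (r - τ)) (huv hτ)]
  · have := intervalIntegral.integral_comp_sub_left (fun τ => u τ * k (r - τ)) r (a := 0) (b := r)
    simp only [sub_sub_cancel, sub_self, sub_zero] at this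
    rw [← integral_Ioc_eq_integral_Ioo, ← integral_Ioc_eq_integral_Ioo,
      ← intervalIntegral.integral_of_le hr, ← intervalIntegral.integral_of_le hr, this]
  · rw [hu _ (sub_nonpos.2 (not_lt.1 fun h => hs.2 ⟨hs.1.1, h⟩)), zero_mul]

theorem hasDerivAt_integral_comp_sub_mul_rpow_neg {u w : ℝ → ℝ} {L : NNReal} {α t T : ℝ}
    (hα : α < 1) (ht : 0 < t) (htT : t ≤ T) (hu : LipschitzWith L u)
    (hu_neg : ∀ x < 0, HasDerivAt u 0 x) (hu_pos : ∀ x ∈ Ioo 0 t, HasDerivAt u (w x) x) :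
    HasDerivAt (fun r => ∫ s in Ioo 0 T, u (r - s) * s ^ (-α))
      (∫ s in Ioo 0 t, w (t - s) * s ^ (-α)) t := by
  have hpow : IntegrableOn (fun s => s ^ (-α)) (Ioo 0 T) :=
    (intervalIntegral.integrableOn_Ioo_rpow_iff (by linarith)).2 (by linarith)
  have hne : ∀ᵐ s, s ≠ t := Measure.ae_ne volume t
  have hint : IntegrableOn (fun s => u (t - s) * s ^ (-α)) (Ioo 0 T) :=
    hpow.continuousOn_mul_of_subset
      (hu.continuous.comp (continuous_const.sub continuous_id)).continuousOn
      isCompact_Icc measurableSet_Ioo Ioo_subset_Icc_self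
  refine (hasDerivAt_integral_comp_sub_mul hu hpow hint ?_).congr_deriv ?_
  · filter_upwards [ae_restrict_mem measurableSet_Ioo, ae_restrict_of_ae hne] with s hs hst
    rcases hst.lt_or_gt with hst | hst
    · exact (hu_pos _ ⟨by linarith, by linarith [hs.1]⟩).differentiableAt
    · exact (hu_neg _ (by linarith)).differentiableAt
  rw [setIntegral_eq_of_subset_of_ae_sdiff_eq_zero measurableSet_Ioo.nullMeasurableSet
    (Ioo_subset_Ioo_right htT) ?_]
  · exact setIntegral_congr_fun measurableSet_Ioo fun s hs => by
      rw [(hu_pos _ ⟨by linarith [hs.2], by linarith [hs.1]⟩).deriv]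
  · filter_upwards [hne] with s hst hs
    have hts : t < s := lt_of_le_of_ne (not_lt.1 fun h => hs.2 ⟨hs.1.1, h⟩) hst.symm
    rw [(hu_neg _ (by linarith)).deriv, zero_mul]

section FractionalIntegral

variable {v : ℝ → ℝ} {α t : ℝ}

theorem hasDerivAt_integral_mul_sub_rpow_neg (hv : ContDiffOn ℝ 1 v (Ici 0)) (hv0 : v 0 = 0)
    (hα : α < 1) (ht : 0 < t) :
    HasDerivAt (fun r => ∫ τ in Ioo 0 r, v τ * (r - τ) ^ (-α))
      (∫ s in Ioo 0 t, derivWithin v (Ici 0) (t - s) * s ^ (-α)) t := by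
  have hT : 0 ≤ t + 1 := by linarith
  set u := IccExtend hT ((Icc 0 (t + 1)).domRestrict v)
  obtain ⟨L, hL⟩ := (hv.mono Icc_subset_Ici_self).exists_lipschitzOnWith one_ne_zero
    (convex_Icc 0 (t + 1)) isCompact_Icc
  have hF : ∀ᶠ r in 𝓝 t, ∫ τ in Ioo 0 r, v τ * (r - τ) ^ (-α)
      = ∫ s in Ioo 0 (t + 1), u (r - s) * s ^ (-α) := by
    filter_upwards [Ioo_mem_nhds ht (lt_add_one t)] with r hr
    exact integral_Ioo_mul_comp_sub_eq (k := fun s => s ^ (-α)) hr.1.le hr.2.le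
      (fun x hx => IccExtend_of_mem hT _ ⟨hx.1.le, by linarith [hx.2, hr.2]⟩)
      fun x hx => (IccExtend_of_le_left hT ((Icc 0 (t + 1)).domRestrict v) hx).trans hv0
  refine HasDerivAt.congr_of_eventuallyEq ?_ hF
  refine hasDerivAt_integral_comp_sub_mul_rpow_neg hα ht (by linarith)
    (hL.lipschitzWith_IccExtend hT) (fun x hx => hasDerivAt_IccExtend_of_lt hT _ hx)
    fun x hx => ?_
  exact (((hv.differentiableOn one_ne_zero) x hx.1.le).hasDerivWithinAt.mono
    Icc_subset_Ici_self).hasDerivAt_IccExtend hT ⟨hx.1, by linarith [hx.2]⟩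

theorem integral_derivWithin_comp_sub_mul_rpow_neg (hv : ContDiffOn ℝ 1 v (Ici 0))
    (hv0 : v 0 = 0) (hα : α < 1) (ht : 0 < t) :
    ∫ s in Ioo 0 t, derivWithin v (Ici 0) (t - s) * s ^ (-α)
      = v t * t ^ (-α) - α * ∫ s in Ioo 0 t, (v (t - s) - v t) * s ^ (-α - 1) := by
  have hmaps : MapsTo (fun s => t - s) (Icc 0 t) (Ici 0) := fun s hs => sub_nonneg.2 hs.2
  have hIBP := integral_Ioo_deriv_mul_rpow_neg (f := fun s => v (t - s) - v t)
    (f' := fun s => -derivWithin v (Ici 0) (t - s)) hα ht (fun s hs => ?_)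
    (((hv.continuousOn_derivWithin (uniqueDiffOn_Ici 0) le_rfl).comp
      (continuous_const.sub continuous_id).continuousOn hmaps).neg) (by simp)
  · simp only [neg_mul, integral_neg, sub_self, hv0, zero_sub] at hIBP
    linarith
  · have hvd := ((hv.differentiableOn one_ne_zero) (t - s) (hmaps hs)).hasDerivWithinAt
    simpa using (hvd.comp s ((hasDerivAt_id s).const_sub t).hasDerivWithinAt hmaps).sub_const (v t)

end FractionalIntegral

/-- For `0 < α < 1` and `v` continuously differentiable on `[0,∞)` with
`v(0) = 0`, the fractional integral `F(t) = ∫₀^t v(τ)(t-τ)^{-α} dτ` is differentiable at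
every `t > 0` with `F'(t) = v(t) t^{-α} − α ∫₀^t (v(t-s) − v(t)) s^{-α-1} ds`. -/
theorem stmt_14 (α : ℝ) (hα : α ∈ Set.Ioo (0:ℝ) 1)
    (v : ℝ → ℝ) (hv : ContDiffOn ℝ 1 v (Set.Ici 0)) (hv0 : v 0 = 0) :
    ∀ t > (0:ℝ),
      HasDerivAt (fun r => ∫ τ in Set.Ioo (0:ℝ) r, v τ * (r - τ) ^ (-α))
        (v t * t ^ (-α) - α * ∫ s in Set.Ioo (0:ℝ) t, (v (t - s) - v t) * s ^ (-α - 1))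
        t := by
  intro t ht
  rw [← integral_derivWithin_comp_sub_mul_rpow_neg hv hv0 hα.2 ht]
  exact hasDerivAt_integral_mul_sub_rpow_neg hv hv0 hα.2 ht
end

section
/- Let 0 < α < 1 and let v : [0,∞) → ℝ be continuously differentiable with v(0) = 0. Then for every t > 0, (1/2) · d/dt ∫₀^t v(τ)² (t-τ)^{-α} dτ + v(t)² / (2 t^α) + (α/2) ∫₀^t (v(τ) − v(t))² (t-τ)^{-α-1} dτ = v(t) · d/dt ∫₀^t v(τ) (t-τ)^{-α} dτ, where both fractional integrals t ↦ ∫₀^t v(τ)(t-τ)^{-α} dτ and t ↦ ∫₀^t v(τ)²(t-τ)^{-α} dτ are differentiable at every t > 0. -/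
/-!
Substituting `τ = r - s` and extending `w` to negative arguments by `w 0 = 0` turns
`∫₀^r w(τ)(r-τ)^{-α} dτ` into `∫₀^R w(r-s) s^{-α} ds` over a fixed interval `(0, R)`. The
extended function is Lipschitz and differentiable off `0`, so one may differentiate under the
integral sign, which gives the derivative `∫₀^t w'(τ)(t-τ)^{-α} dτ` at every `t > 0`.
Applied to `v` and `v²`, the claim becomes the integration by parts of
`d/dτ [(v(τ)-v(t))² (t-τ)^{-α}]` over `(0, t)`; the boundary term at `τ = t` vanishes because
`(v(τ)-v(t))² ≤ L² (t-τ)²`, which also makes the kernel `(t-τ)^{-α-1}` integrable.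
-/

open MeasureTheory Real Set Filter Topology
open scoped NNReal

variable {α : ℝ}

lemma integrableOn_Ioo_sub_rpow {p : ℝ} (hp : -1 < p) (a b : ℝ) :
    IntegrableOn (fun τ => (b - τ) ^ p) (Ioo a b) := by
  have h : IntervalIntegrable (fun τ => (b - τ) ^ p) volume a b := by
    simpa using
      (intervalIntegral.intervalIntegrable_rpow' hp (a := b - a) (b := b - b)).comp_sub_left b
  exact h.def'.mono_set (Ioo_subset_Ioc_self.trans Ioc_subset_uIoc)

lemma setIntegral_Ioo_zero_comp_sub_left (f : ℝ → ℝ) (r : ℝ) :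
    ∫ s in Ioo 0 r, f (r - s) = ∫ τ in Ioo 0 r, f τ := by
  rcases le_or_gt r 0 with hr | hr
  · simp [Ioo_eq_empty (not_lt.mpr hr)]
  · simp only [← integral_Ioc_eq_integral_Ioo, ← intervalIntegral.integral_of_le hr.le,
      intervalIntegral.integral_comp_sub_left, sub_zero, sub_self]

lemma integral_Ioo_mul_comp_sub_eq_integral_comp_sub_mul {g g' k : ℝ → ℝ}
    (hpos : EqOn g' g (Ioi 0)) (hneg : ∀ x < 0, g' x = 0) {r R : ℝ} (hrR : r ≤ R) :
    ∫ τ in Ioo 0 r, g τ * k (r - τ) = ∫ s in Ioo 0 R, g' (r - s) * k s := by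
  rw [← setIntegral_Ioo_zero_comp_sub_left, eq_comm,
    setIntegral_eq_of_subset_of_ae_sdiff_eq_zero measurableSet_Ioo.nullMeasurableSet
      (Ioo_subset_Ioo_right hrR)]
  · refine setIntegral_congr_fun measurableSet_Ioo fun s hs => ?_
    simp only [sub_sub_cancel, hpos (show r - s ∈ Ioi 0 from sub_pos.mpr hs.2)]
  · filter_upwards [volume.ae_ne r] with s hsr hs
    have : r < s := lt_of_le_of_ne (not_lt.mp fun h => hs.2 ⟨hs.1.1, h⟩) hsr.symm
    simp [hneg _ (sub_neg.mpr this)]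

lemma LipschitzOnWith.sq_sub_mul_rpow_le {f : ℝ → ℝ} {L : ℝ≥0} {S : Set ℝ}
    (hf : LipschitzOnWith L f S) {x y : ℝ} (hx : x ∈ S) (hy : y ∈ S) (hxy : x < y) (p : ℝ) :
    (f x - f y) ^ 2 * (y - x) ^ p ≤ L ^ 2 * (y - x) ^ (p + 2) := by
  have hd : |f x - f y| ≤ L * (y - x) := by
    simpa [Real.dist_eq, abs_of_neg (sub_neg.mpr hxy)] using hf.dist_le_mul x hx y hy
  have hyx : 0 < y - x := sub_pos.mpr hxy
  calc (f x - f y) ^ 2 * (y - x) ^ p ≤ (L * (y - x)) ^ 2 * (y - x) ^ p := by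
        rw [← sq_abs]
        gcongr
    _ = L ^ 2 * (y - x) ^ (p + 2) := by
        rw [rpow_add hyx, rpow_two]; ring

theorem hasDerivAt_integral_Ioo_comp_sub_mul {f k : ℝ → ℝ} {L : ℝ≥0} {R t : ℝ}
    (hf : LipschitzOnWith L f (Iic R)) (hdiff : ∀ x ≠ 0, DifferentiableAt ℝ f x)
    (hk : IntegrableOn k (Ioo 0 R)) (ht : t < R) :
    HasDerivAt (fun r => ∫ s in Ioo 0 R, f (r - s) * k s)
      (∫ s in Ioo 0 R, deriv f (t - s) * k s) t := by
  have hmaps : ∀ x ≤ R, MapsTo (fun s => x - s) (Ioo 0 R) (Iic R) := fun x hx s hs => by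
    simp only [mem_Iic]; linarith [hs.1]
  have hcont : ∀ x ≤ R, ContinuousOn (fun s => f (x - s)) (Ioo 0 R) := fun x hx =>
    hf.continuousOn.comp (continuousOn_const.sub continuousOn_id) (hmaps x hx)
  refine (hasDerivAt_integral_of_dominated_loc_of_lip (bound := fun s => L * |k s|)
    (Iio_mem_nhds ht) ?_ ?_ ?_ ?_ ?_ ?_).2
  · filter_upwards [Iio_mem_nhds ht] with x hx
    exact ((hcont x hx.le).aestronglyMeasurable measurableSet_Ioo).mul hk.1
  · have hcont' : ContinuousOn (fun s => f (t - s)) (Icc 0 R) :=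
      hf.continuousOn.comp (continuousOn_const.sub continuousOn_id) fun s hs => by
        simp only [mem_Iic]; linarith [hs.1]
    exact hk.continuousOn_mul_of_subset hcont' isCompact_Icc measurableSet_Ioo
      Ioo_subset_Icc_self
  · exact ((measurable_deriv f).comp (measurable_const.sub measurable_id)).aestronglyMeasurable.mul
      hk.1
  · filter_upwards [ae_restrict_mem measurableSet_Ioo] with s hs
    refine LipschitzOnWith.of_dist_le_mul fun x hx y hy => ?_
    have hxy : |f (x - s) - f (y - s)| ≤ L * |x - y| := by
      simpa [Real.dist_eq] using
        hf.dist_le_mul (x - s) (hmaps x (le_of_lt hx) hs) (y - s) (hmaps y (le_of_lt hy) hs)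
    rw [Real.coe_nnabs, abs_of_nonneg (by positivity), Real.dist_eq, Real.dist_eq, ← sub_mul,
      abs_mul]
    calc |f (x - s) - f (y - s)| * |k s| ≤ L * |x - y| * |k s| := by gcongr
      _ = L * |k s| * |x - y| := by ring
  · exact hk.norm.const_mul _
  · filter_upwards [ae_restrict_of_ae (volume.ae_ne t)] with s hs
    simpa using ((hdiff _ (sub_ne_zero.mpr (Ne.symm hs))).hasDerivAt.comp t
      ((hasDerivAt_id t).sub_const s)).mul_const (k s)

lemma LipschitzOnWith.tendsto_sq_sub_mul_rpow_sub {f : ℝ → ℝ} {L : ℝ≥0} {a t p : ℝ}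
    (hp : -2 < p) (hf : LipschitzOnWith L f (Icc a t)) (hat : a < t) :
    Tendsto (fun τ => (f τ - f t) ^ 2 * (t - τ) ^ p) (𝓝[<] t) (𝓝 0) := by
  have hsub : Tendsto (fun τ => t - τ) (𝓝[<] t) (𝓝 0) := by
    have h : Tendsto (fun τ : ℝ => t - τ) (𝓝 t) (𝓝 (t - t)) := tendsto_const_nhds.sub tendsto_id
    simpa using h.mono_left nhdsWithin_le_nhds
  have hbound : Tendsto (fun τ => (L : ℝ) ^ 2 * (t - τ) ^ (p + 2)) (𝓝[<] t) (𝓝 0) := by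
    simpa [zero_rpow (by linarith : p + 2 ≠ 0)] using
      (hsub.rpow_const (p := p + 2) (Or.inr (by linarith))).const_mul ((L : ℝ) ^ 2)
  refine squeeze_zero' ?_ ?_ hbound
  · filter_upwards [self_mem_nhdsWithin] with τ hτ
    exact mul_nonneg (sq_nonneg _) (rpow_nonneg (sub_nonneg.mpr (le_of_lt hτ)) _)
  · filter_upwards [Ioo_mem_nhdsLT hat] with τ hτ
    exact hf.sq_sub_mul_rpow_le ⟨hτ.1.le, hτ.2.le⟩ ⟨hat.le, le_rfl⟩ hτ.2 _

lemma LipschitzOnWith.integrableOn_sq_sub_mul_rpow_sub {f : ℝ → ℝ} {L : ℝ≥0} {a t p : ℝ}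
    (hp : -3 < p) (hf : LipschitzOnWith L f (Icc a t)) :
    IntegrableOn (fun τ => (f τ - f t) ^ 2 * (t - τ) ^ p) (Ioo a t) := by
  rcases le_or_gt t a with hta | hat
  · simp [Ioo_eq_empty (not_lt.mpr hta)]
  refine Integrable.mono' ((integrableOn_Ioo_sub_rpow (p := p + 2) (by linarith) a t).const_mul
    ((L : ℝ) ^ 2)) ?_ ?_
  · exact ((((hf.continuousOn.mono Ioo_subset_Icc_self).sub continuousOn_const).pow 2
      ).aestronglyMeasurable measurableSet_Ioo).mul
      ((measurable_const.sub measurable_id).pow_const _).aestronglyMeasurable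
  · filter_upwards [ae_restrict_mem measurableSet_Ioo] with τ hτ
    rw [Real.norm_of_nonneg (mul_nonneg (sq_nonneg _) (rpow_nonneg (by linarith [hτ.2]) _))]
    exact hf.sq_sub_mul_rpow_le ⟨hτ.1.le, hτ.2.le⟩ ⟨hat.le, le_rfl⟩ hτ.2 _

section Extension

variable {w : ℝ → ℝ}

lemma ContDiffOn.hasDerivAt_derivWithin_Ici (hw : ContDiffOn ℝ 1 w (Ici 0)) {x : ℝ}
    (hx : 0 < x) : HasDerivAt w (derivWithin w (Ici 0) x) x := by
  rw [derivWithin_of_mem_nhds (Ici_mem_nhds hx)]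
  exact ((hw.differentiableOn one_ne_zero).differentiableAt (Ici_mem_nhds hx)).hasDerivAt

lemma ContDiffOn.hasDerivAt_comp_max_zero (hw : ContDiffOn ℝ 1 w (Ici 0)) {x : ℝ}
    (hx : 0 < x) : HasDerivAt (fun y => w (max y 0)) (derivWithin w (Ici 0) x) x :=
  (hw.hasDerivAt_derivWithin_Ici hx).congr_of_eventuallyEq <| by
    filter_upwards [Ioi_mem_nhds hx] with y hy using by rw [max_eq_left (le_of_lt hy)]

lemma hasDerivAt_comp_max_zero_of_neg {x : ℝ} (hx : x < 0) :
    HasDerivAt (fun y => w (max y 0)) 0 x :=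
  (hasDerivAt_const x (w 0)).congr_of_eventuallyEq <| by
    filter_upwards [Iio_mem_nhds hx] with y hy using by rw [max_eq_right (le_of_lt hy)]

lemma ContDiffOn.exists_lipschitzOnWith_comp_max_zero (hw : ContDiffOn ℝ 1 w (Ici 0)) {R : ℝ}
    (hR : 0 ≤ R) : ∃ L, LipschitzOnWith L (fun y => w (max y 0)) (Iic R) := by
  obtain ⟨L, hL⟩ := (hw.mono Icc_subset_Ici_self).exists_lipschitzOnWith one_ne_zero
    (convex_Icc 0 R) isCompact_Icc
  exact ⟨L * 1, hL.comp (LipschitzWith.id.max_const 0).lipschitzOnWith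
    fun y hy => ⟨le_max_right _ _, max_le hy hR⟩⟩

theorem ContDiffOn.hasDerivAt_integral_Ioo_mul_rpow_sub (hα : α < 1)
    (hw : ContDiffOn ℝ 1 w (Ici 0)) (hw0 : w 0 = 0) {t : ℝ} (ht : 0 < t) :
    HasDerivAt (fun r => ∫ τ in Ioo 0 r, w τ * (r - τ) ^ (-α))
      (∫ τ in Ioo 0 t, derivWithin w (Ici 0) τ * (t - τ) ^ (-α)) t := by
  set wext : ℝ → ℝ := fun y => w (max y 0)
  obtain ⟨L, hL⟩ := hw.exists_lipschitzOnWith_comp_max_zero (R := 2 * t) (by positivity)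
  have hdiff : ∀ x ≠ 0, DifferentiableAt ℝ wext x := fun x hx => by
    rcases hx.lt_or_gt with hx | hx
    · exact (hasDerivAt_comp_max_zero_of_neg hx).differentiableAt
    · exact (hw.hasDerivAt_comp_max_zero hx).differentiableAt
  have hext : ∀ r ≤ 2 * t, ∫ τ in Ioo 0 r, w τ * (r - τ) ^ (-α)
      = ∫ s in Ioo 0 (2 * t), wext (r - s) * s ^ (-α) := fun r hr =>
    integral_Ioo_mul_comp_sub_eq_integral_comp_sub_mul (k := fun s => s ^ (-α))
      (fun x hx => by simp [wext, max_eq_left (mem_Ioi.mp hx).le])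
      (fun x hx => by simp [wext, max_eq_right hx.le, hw0]) hr
  have hext_deriv : ∫ τ in Ioo 0 t, derivWithin w (Ici 0) τ * (t - τ) ^ (-α)
      = ∫ s in Ioo 0 (2 * t), deriv wext (t - s) * s ^ (-α) :=
    integral_Ioo_mul_comp_sub_eq_integral_comp_sub_mul (k := fun s => s ^ (-α))
      (fun x hx => (hw.hasDerivAt_comp_max_zero hx).deriv)
      (fun x hx => (hasDerivAt_comp_max_zero_of_neg hx).deriv) (by linarith)
  have hk : IntegrableOn (fun s => s ^ (-α)) (Ioo 0 (2 * t)) :=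
    (intervalIntegral.integrableOn_Ioo_rpow_iff (by positivity)).mpr (by linarith)
  rw [hext_deriv]
  refine (hasDerivAt_integral_Ioo_comp_sub_mul hL hdiff hk (by linarith)).congr_of_eventuallyEq ?_
  filter_upwards [Iio_mem_nhds (by linarith : t < 2 * t)] with r hr using hext r hr.le

theorem ContDiffOn.integral_sq_sub_mul_rpow_sub (hα : α < 1)
    (hw : ContDiffOn ℝ 1 w (Ici 0)) {t : ℝ} (ht : 0 < t) :
    α * (∫ τ in Ioo 0 t, (w τ - w t) ^ 2 * (t - τ) ^ (-α - 1)) + (w 0 - w t) ^ 2 * t ^ (-α)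
      = 2 * w t * (∫ τ in Ioo 0 t, derivWithin w (Ici 0) τ * (t - τ) ^ (-α))
        - ∫ τ in Ioo 0 t, derivWithin (fun x => w x ^ 2) (Ici 0) τ * (t - τ) ^ (-α) := by
  set w' := derivWithin w (Ici 0)
  set w2' := derivWithin (fun x => w x ^ 2) (Ici 0)
  have hw2 : ContDiffOn ℝ 1 (fun x => w x ^ 2) (Ici 0) := hw.pow 2
  have hk := integrableOn_Ioo_sub_rpow (p := -α) (by linarith) 0 t
  have hI : ∀ g : ℝ → ℝ, ContDiffOn ℝ 1 g (Ici 0) →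
      IntegrableOn (fun τ => derivWithin g (Ici 0) τ * (t - τ) ^ (-α)) (Ioo 0 t) := fun g hg =>
    hk.continuousOn_mul_of_subset
      ((hg.continuousOn_derivWithin (uniqueDiffOn_Ici 0) le_rfl).mono Icc_subset_Ici_self)
      isCompact_Icc measurableSet_Ioo Ioo_subset_Icc_self
  have hI1 : IntegrableOn (fun τ => w' τ * (t - τ) ^ (-α)) (Ioo 0 t) := hI w hw
  have hI2 : IntegrableOn (fun τ => w2' τ * (t - τ) ^ (-α)) (Ioo 0 t) := hI _ hw2
  obtain ⟨L, hL⟩ := (hw.mono Icc_subset_Ici_self).exists_lipschitzOnWith one_ne_zero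
    (convex_Icc 0 t) isCompact_Icc
  have hI3 : IntegrableOn (fun τ => (w τ - w t) ^ 2 * (t - τ) ^ (-α - 1)) (Ioo 0 t) :=
    hL.integrableOn_sq_sub_mul_rpow_sub (by linarith)
  have hderiv : ∀ τ ∈ Ioo 0 t, HasDerivAt (fun τ => (w τ - w t) ^ 2 * (t - τ) ^ (-α))
      (w2' τ * (t - τ) ^ (-α) - 2 * w t * (w' τ * (t - τ) ^ (-α))
        + α * ((w τ - w t) ^ 2 * (t - τ) ^ (-α - 1))) τ := fun τ hτ => by
    have hkτ := ((hasDerivAt_id τ).const_sub t).rpow_const (p := -α)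
      (Or.inl (sub_pos.mpr hτ.2).ne')
    have h := (((hw2.hasDerivAt_derivWithin_Ici hτ.1).sub
      ((hw.hasDerivAt_derivWithin_Ici hτ.1).const_mul (2 * w t))).add_const (w t ^ 2)).mul hkτ
    rw [show (fun τ => (w τ - w t) ^ 2 * (t - τ) ^ (-α))
        = fun x => (w x ^ 2 - 2 * w t * w x + w t ^ 2) * (t - x) ^ (-α) by funext x; ring]
    exact h.congr_deriv (by simp only [id, Pi.sub_apply]; ring)
  have hat0 : Tendsto (fun τ => (w τ - w t) ^ 2 * (t - τ) ^ (-α)) (𝓝[>] 0)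
      (𝓝 ((w 0 - w t) ^ 2 * t ^ (-α))) := by
    have hc : ContinuousWithinAt (fun τ => (w τ - w t) ^ 2 * (t - τ) ^ (-α)) (Ici 0) 0 :=
      (((hw.continuousOn 0 self_mem_Ici).sub continuousWithinAt_const).pow 2).mul
        ((continuousAt_const.sub continuousAt_id).rpow_const
          (Or.inl (by simp [ht.ne']))).continuousWithinAt
    simpa using (hc.mono Ioi_subset_Ici_self).tendsto
  have hI21 : IntegrableOn (fun τ => w2' τ * (t - τ) ^ (-α) - 2 * w t * (w' τ * (t - τ) ^ (-α)))
      (Ioo 0 t) := hI2.sub (hI1.const_mul _)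
  have hFTC := intervalIntegral.integral_eq_sub_of_hasDerivAt_of_tendsto ht hderiv
    ((intervalIntegrable_iff_integrableOn_Ioo_of_le ht.le).mpr (hI21.add (hI3.const_mul α)))
    hat0 (hL.tendsto_sq_sub_mul_rpow_sub (by linarith) ht)
  rw [intervalIntegral.integral_of_le ht.le, integral_Ioc_eq_integral_Ioo,
    integral_add hI21 (hI3.const_mul α), integral_sub hI2 (hI1.const_mul _),
    integral_const_mul, integral_const_mul] at hFTC
  linarith

end Extension

/-- the chain-rule identity
`(1/2) d/dt ∫₀^t v²(τ)(t-τ)^{-α} dτ + v²(t)/(2t^α)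
   + (α/2) ∫₀^t (v(τ)-v(t))²(t-τ)^{-α-1} dτ = v(t) d/dt ∫₀^t v(τ)(t-τ)^{-α} dτ`
for `v` continuously differentiable on `[0,∞)` with `v(0) = 0`; both fractional
integrals are differentiable at every `t > 0`. -/
theorem stmt_15 (α : ℝ) (hα : α ∈ Set.Ioo (0:ℝ) 1)
    (v : ℝ → ℝ) (hv : ContDiffOn ℝ 1 v (Set.Ici 0)) (hv0 : v 0 = 0) :
    ∀ t > (0:ℝ),
      DifferentiableAt ℝ (fun r => ∫ τ in Set.Ioo (0:ℝ) r, (v τ) ^ 2 * (r - τ) ^ (-α)) t ∧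
      DifferentiableAt ℝ (fun r => ∫ τ in Set.Ioo (0:ℝ) r, v τ * (r - τ) ^ (-α)) t ∧
      (1 / 2) * deriv (fun r => ∫ τ in Set.Ioo (0:ℝ) r, (v τ) ^ 2 * (r - τ) ^ (-α)) t
          + (v t) ^ 2 / (2 * t ^ α)
          + (α / 2) * ∫ τ in Set.Ioo (0:ℝ) t, (v τ - v t) ^ 2 * (t - τ) ^ (-α - 1)
        = v t * deriv (fun r => ∫ τ in Set.Ioo (0:ℝ) r, v τ * (r - τ) ^ (-α)) t := by
  intro t ht
  have hD1 := hv.hasDerivAt_integral_Ioo_mul_rpow_sub hα.2 hv0 ht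
  have hD2 := (hv.pow 2).hasDerivAt_integral_Ioo_mul_rpow_sub hα.2 (by simp [hv0]) ht
  have hparts := hv.integral_sq_sub_mul_rpow_sub hα.2 ht
  refine ⟨hD2.differentiableAt, hD1.differentiableAt, ?_⟩
  rw [hD1.deriv, hD2.deriv]
  rw [hv0, zero_sub, neg_sq, rpow_neg ht.le] at hparts
  linear_combination hparts / 2
end
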